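/- arXiv:math/0111156 — 2 statements merged into one kernel-verified Lean document; each statement's English description precedes it below -/
import Mathlib

section
/- The lattice NC_{n+1} of non-crossing partitions of [n+1], with the edge-labeling λ(μ,ν) = max{min B, min B'} − 1 when ν covers μ by merging blocks B and B' of μ, is an S_n EL-labeling; consequently NC_{n+1} is supersolvable. -/
/-! Common definitions: graded posets, saturated/maximal chains, EL-labelings,
inversions and weak order on permutations, descent operators, flag vectors. -/

section Perm

/-- The inversion set `INV(v) = {(v j, v i) : i < j, v i > v j}` of a permutation of `Fin n`. -/
def invSet {n : ℕ} (v : Equiv.Perm (Fin n)) : Set (Fin n × Fin n) :=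
  {p | ∃ i j : Fin n, i < j ∧ v j = p.1 ∧ v i = p.2 ∧ v j < v i}

/-- The number of inversions of a permutation. -/
noncomputable def invCount {n : ℕ} (v : Equiv.Perm (Fin n)) : ℕ :=
  (invSet v).ncard

/-- The adjacent transposition swapping `i` and `i+1` (0-indexed) in `Fin n`
(junk value `1` if out of range). -/
def adjSwap (n : ℕ) (i : ℕ) : Equiv.Perm (Fin n) :=
  if h : i + 1 < n then Equiv.swap ⟨i, Nat.lt_of_succ_lt h⟩ ⟨i + 1, h⟩ else 1

/-- One step of the right weak order: `v` is obtained from `w` by multiplying on the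
right by an adjacent transposition which removes exactly one inversion. -/
def weakStep {n : ℕ} (w v : Equiv.Perm (Fin n)) : Prop :=
  ∃ i : ℕ, i + 1 < n ∧ v = w * adjSwap n i ∧ invCount v + 1 = invCount w

/-- Right weak order: `v ≤_R w` iff `v` is obtained from `w` by a sequence of
inversion-removing right multiplications by adjacent transpositions. -/
def leRW {n : ℕ} (v w : Equiv.Perm (Fin n)) : Prop :=
  Relation.ReflTransGen weakStep w v

end Perm

section Posets

variable {P : Type*}

/-- `c` (an `ℕ`-indexed sequence, constant equal to `y` from index `k` on) is a saturated
chain `x = c 0 ⋖ c 1 ⋖ ⋯ ⋖ c k = y` of length `k` from `x` to `y`. -/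
def IsSatChain [PartialOrder P] (k : ℕ) (c : ℕ → P) (x y : P) : Prop :=
  c 0 = x ∧ (∀ j, k ≤ j → c j = y) ∧ ∀ j, j < k → c j ⋖ c (j + 1)

/-- The chain `c` of length `k` has (weakly) increasing labels. -/
def IncreasingChain [PartialOrder P] (lab : P → P → ℤ) (k : ℕ) (c : ℕ → P) : Prop :=
  ∀ j, j + 1 < k → lab (c j) (c (j + 1)) ≤ lab (c (j + 1)) (c (j + 2))

/-- The label word of length-`k` chain `c` lexicographically strictly precedes that of `d`. -/
def LexLt [PartialOrder P] (lab : P → P → ℤ) (k : ℕ) (c d : ℕ → P) : Prop :=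
  ∃ i < k, (∀ j, j < i → lab (c j) (c (j + 1)) = lab (d j) (d (j + 1))) ∧
    lab (c i) (c (i + 1)) < lab (d i) (d (i + 1))

/-- `lab` is an EL-labeling: in every interval `[x,y]` (containing a saturated chain of
length `k`), there is a unique maximal chain with increasing labels, and it is
lexicographically strictly smaller than every other maximal chain of the interval. -/
def IsELLabeling [PartialOrder P] (lab : P → P → ℤ) : Prop :=
  ∀ x y : P, x < y → ∀ k : ℕ, (∃ c, IsSatChain k c x y) →
    (∃! c, IsSatChain k c x y ∧ IncreasingChain lab k c) ∧
    ∀ c d, IsSatChain k c x y → IncreasingChain lab k c → IsSatChain k d x y → c ≠ d →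
      LexLt lab k c d

/-- `rk` is a rank function making `P` a graded poset of rank `n`, with `rk ⊥ = 0`,
`rk ⊤ = n`, and ranks increasing by one along covers. -/
def IsGraded [PartialOrder P] [BoundedOrder P] (n : ℕ) (rk : P → ℕ) : Prop :=
  rk (⊥ : P) = 0 ∧ rk (⊤ : P) = n ∧ ∀ x y : P, x ⋖ y → rk y = rk x + 1

/-- `lab` is an `S_n` EL-labeling: an EL-labeling such that the label word of every
maximal chain of `P` is a permutation of `{1, …, n}`. -/
def IsSnELLabeling [PartialOrder P] [BoundedOrder P] (n : ℕ) (lab : P → P → ℤ) : Prop :=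
  IsELLabeling lab ∧
    ∀ c : ℕ → P, IsSatChain n c ⊥ ⊤ →
      ∃ σ : Equiv.Perm (Fin n), ∀ j : Fin n, lab (c j) (c ((j : ℕ) + 1)) = ((σ j : ℕ) : ℤ) + 1

/-- The maximal chains of a graded bounded poset of rank `n`. -/
abbrev MaxChain (n : ℕ) (P : Type*) [PartialOrder P] [BoundedOrder P] :=
  {c : ℕ → P // IsSatChain n c ⊥ ⊤}

/-- The label word of `c` has a descent at position `i` (meaningful for `1 ≤ i ≤ n-1`):
the label of the `i`-th edge exceeds the label of the `(i+1)`-st edge. -/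
def DescentAt [PartialOrder P] (lab : P → P → ℤ) (c : ℕ → P) (i : ℕ) : Prop :=
  lab (c i) (c (i + 1)) < lab (c (i - 1)) (c i)

/-- The maximal chain `c` has label word (the permutation) `σ`, where the label of the
`j`-th edge is `σ(j)` (written 1-indexed: the value `(σ j) + 1`). -/
def HasWord [PartialOrder P] (lab : P → P → ℤ) {n : ℕ} (c : ℕ → P)
    (σ : Equiv.Perm (Fin n)) : Prop :=
  ∀ j : Fin n, lab (c j) (c ((j : ℕ) + 1)) = ((σ j : ℕ) : ℤ) + 1

/-- The defining property of the descent-removing operators `U_i` attached to an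
`S_n` EL-labeling: `U i m` agrees with `m` away from rank `i` and has no descent at `i`. -/
def IsUSystem [PartialOrder P] [BoundedOrder P] (n : ℕ) (lab : P → P → ℤ)
    (U : ℕ → MaxChain n P → MaxChain n P) : Prop :=
  ∀ i, 1 ≤ i → i < n → ∀ m : MaxChain n P,
    (∀ j, j ≠ i → (U i m).1 j = m.1 j) ∧ ¬ DescentAt lab (U i m).1 i

/-- `m'` lies in the closure of the maximal chain `m` under the operators `U_i`. -/
def InClosure [PartialOrder P] [BoundedOrder P] (n : ℕ)
    (U : ℕ → MaxChain n P → MaxChain n P) (m m' : MaxChain n P) : Prop :=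
  ∃ l : List ℕ, (∀ i ∈ l, 1 ≤ i ∧ i < n) ∧ List.foldr U m l = m'

/-- `α_P(S)`: the number of chains of `P` whose rank set is exactly `S`. -/
noncomputable def alphaP [PartialOrder P] (rk : P → ℕ) (S : Finset ℕ) : ℕ :=
  Nat.card {t : Finset P // IsChain (· ≤ ·) (t : Set P) ∧ t.image rk = S ∧ t.card = S.card}

/-- The flag `h`-vector `β_P(S) = ∑_{T ⊆ S} (-1)^{|S - T|} α_P(T)`. -/
noncomputable def betaP [PartialOrder P] (rk : P → ℕ) (S : Finset ℕ) : ℤ :=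
  ∑ T ∈ S.powerset, (-1 : ℤ) ^ (S.card - T.card) * (alphaP rk T : ℤ)

/-- `P` is bowtie-free: there are no distinct `a, b, c, d` with `a` and `b` each
covering both `c` and `d`. -/
def BowtieFree (P : Type*) [PartialOrder P] : Prop :=
  ∀ a b c d : P, c ⋖ a → d ⋖ a → c ⋖ b → d ⋖ b → a = b ∨ c = d

/-- The operators `U_i`, `1 ≤ i ≤ n-1`, form a local 0-Hecke action on the maximal
chains: they are local at rank `i`, idempotent, commute at distance `≥ 2`, and
satisfy the braid relations. -/
def IsLocalHeckeAction [PartialOrder P] [BoundedOrder P] (n : ℕ)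
    (U : ℕ → MaxChain n P → MaxChain n P) : Prop :=
  (∀ i, 1 ≤ i → i < n → ∀ m : MaxChain n P, ∀ j, j ≠ i → (U i m).1 j = m.1 j) ∧
  (∀ i, 1 ≤ i → i < n → ∀ m, U i (U i m) = U i m) ∧
  (∀ i j, 1 ≤ i → i < n → 1 ≤ j → j < n → i + 2 ≤ j → ∀ m, U i (U j m) = U j (U i m)) ∧
  (∀ i, 1 ≤ i → i + 1 < n → ∀ m,
    U i (U (i + 1) (U i m)) = U (i + 1) (U i (U (i + 1) m)))

/-- A good `H_n(0)` action: a local 0-Hecke action on the maximal chains such that for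
every `S ⊆ [n-1]`, `α_P(S)` equals the number of maximal chains whose descent set
`{i : U_i m ≠ m}` is contained in `S` (equivalently, `ω F_P = ch χ_P`). -/
def IsGoodHeckeAction [PartialOrder P] [BoundedOrder P] (n : ℕ) (rk : P → ℕ)
    (U : ℕ → MaxChain n P → MaxChain n P) : Prop :=
  IsLocalHeckeAction n U ∧
    ∀ S : Finset ℕ, S ⊆ Finset.Icc 1 (n - 1) →
      alphaP rk S =
        Nat.card {m : MaxChain n P // ∀ i, 1 ≤ i → i < n → U i m ≠ m → i ∈ S}

/-- An expression `U_{i_1} ⋯ U_{i_r} (m) = m'` (the list `l = [i_1, …, i_r]`, applied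
right-to-left) is restless: every single application strictly changes the chain. -/
def Restless [PartialOrder P] [BoundedOrder P] {n : ℕ}
    (U : ℕ → MaxChain n P → MaxChain n P) (l : List ℕ) (m m' : MaxChain n P) : Prop :=
  List.foldr U m l = m' ∧
    ∀ i t, (i :: t) <:+ l → U i (List.foldr U m t) ≠ List.foldr U m t

/-- A subset of a lattice closed under join and meet. -/
def SublClosed [Lattice P] (t : Set P) : Prop :=
  ∀ a ∈ t, ∀ b ∈ t, a ⊔ b ∈ t ∧ a ⊓ b ∈ t

/-- The sublattice generated by the set `s`. -/
def genSub [Lattice P] (s : Set P) : Set P :=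
  ⋂₀ {t : Set P | s ⊆ t ∧ SublClosed t}

/-- The subset `t` is distributive (as a sublattice). -/
def DistribOn [Lattice P] (t : Set P) : Prop :=
  ∀ a ∈ t, ∀ b ∈ t, ∀ c ∈ t, a ⊓ (b ⊔ c) = (a ⊓ b) ⊔ (a ⊓ c)

/-- A lattice (graded, of rank `n`) is supersolvable if it has a maximal chain (an
M-chain) which together with any other chain generates a distributive sublattice. -/
def Supersolvable (n : ℕ) (P : Type*) [Lattice P] [BoundedOrder P] : Prop :=
  ∃ M : MaxChain n P, ∀ c : Set P, IsChain (· ≤ ·) c →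
    DistribOn (genSub (Set.range M.1 ∪ c))

end Posets

section NC

/-- A set partition (as a setoid) of `Fin m` is noncrossing: there are no
`i < j < k < l` with `i ∼ k` and `j ∼ l` lying in different blocks. -/
def Noncrossing {m : ℕ} (r : Setoid (Fin m)) : Prop :=
  ∀ i j k l : Fin m, i < j → j < k → k < l → r i k → r j l → r i j

/-- The poset `NC_m` of noncrossing partitions of `[m]`, ordered by refinement. -/
def NCP (m : ℕ) : Type := {r : Setoid (Fin m) // Noncrossing r}

instance (m : ℕ) : PartialOrder (NCP m) := Subtype.partialOrder _

/-- The meet of an arbitrary family of noncrossing partitions (common refinement). -/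
def ncInf {m : ℕ} (S : Set (NCP m)) : NCP m :=
  ⟨⟨fun x y => x = y ∨ ∀ r ∈ S, r.1 x y,
    ⟨fun _ => Or.inl rfl,
     fun h => h.elim (fun e => Or.inl e.symm)
       (fun h => Or.inr fun r hr => r.1.symm (h r hr)),
     fun {x y z} hxy hyz => by
        rcases hxy with rfl | f
        · exact hyz
        · rcases hyz with rfl | g
          · exact Or.inr f
          · exact Or.inr fun r hr => r.1.trans (f r hr) (g r hr)⟩⟩,
   by
    intro i j k l hij hjk hkl hik hjl
    rcases hik with rfl | fik
    · exact absurd (hij.trans hjk) (lt_irrefl i)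
    rcases hjl with rfl | fjl
    · exact absurd (hjk.trans hkl) (lt_irrefl j)
    exact Or.inr fun r hr => r.2 i j k l hij hjk hkl (fik r hr) (fjl r hr)⟩

noncomputable instance (m : ℕ) : InfSet (NCP m) := ⟨ncInf⟩

noncomputable instance (m : ℕ) : CompleteLattice (NCP m) :=
  completeLatticeOfInf (NCP m)
    (by
      intro S
      constructor
      · intro r hr
        show (ncInf S).1 ≤ r.1
        rw [Setoid.le_def]
        intro x y hxy
        rcases hxy with rfl | f
        · exact r.1.refl' x
        · exact f r hr
      · intro b hb
        show b.1 ≤ (ncInf S).1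
        rw [Setoid.le_def]
        intro x y hxy
        exact Or.inr fun r hr => Setoid.le_def.mp (hb hr) hxy)

open scoped Classical in
/-- The minimum of the block of `a` in the partition `r`. -/
noncomputable def minBlk {m : ℕ} (r : Setoid (Fin m)) (a : Fin m) : Fin m :=
  Finset.min' (Finset.univ.filter fun b => r b a)
    ⟨a, Finset.mem_filter.mpr ⟨Finset.mem_univ a, Setoid.refl a⟩⟩

end NC

section NCAux
variable {m : ℕ}

lemma ncp_le_iff {μ ν : NCP m} : μ ≤ ν ↔ ∀ x y : Fin m, μ.1 x y → ν.1 x y := by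
  constructor
  · intro h x y hxy
    exact Setoid.le_def.mp h hxy
  · intro h
    show μ.1 ≤ ν.1
    rw [Setoid.le_def]
    intro x y hxy
    exact h x y hxy

lemma ncp_ext {μ ν : NCP m} (h : ∀ x y : Fin m, μ.1 x y ↔ ν.1 x y) : μ = ν :=
  le_antisymm (ncp_le_iff.mpr fun x y hx => (h x y).mp hx)
    (ncp_le_iff.mpr fun x y hx => (h x y).mpr hx)

lemma ncp_bot_iff (x y : Fin m) : (⊥ : NCP m).1 x y ↔ x = y := by
  constructor
  · intro h
    rcases h with h | h
    · exact h
    · exact h ⟨⟨Eq, ⟨fun _ => rfl, Eq.symm, Eq.trans⟩⟩, by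
        intro i j k l hij hjk _ hik _
        exact absurd (hik ▸ hij.trans hjk) (lt_irrefl i)⟩ trivial
  · rintro rfl; exact Or.inl rfl

lemma ncp_top_iff (x y : Fin m) : (⊤ : NCP m).1 x y ↔ True := by
  constructor
  · intro _; trivial
  · intro _
    show x = y ∨ _
    exact Or.inr (fun r hr => absurd hr (by simp [Set.mem_empty_iff_false]))

lemma ncp_inf_iff (μ ν : NCP m) (x y : Fin m) : (μ ⊓ ν).1 x y ↔ μ.1 x y ∧ ν.1 x y := by
  constructor
  · intro h
    rcases h with rfl | h
    · exact ⟨μ.1.refl' x, ν.1.refl' x⟩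
    · exact ⟨h μ (by simp), h ν (by simp)⟩
  · rintro ⟨h1, h2⟩
    right
    intro r hr
    simp only [Set.mem_insert_iff, Set.mem_singleton_iff] at hr
    rcases hr with rfl | rfl
    · exact h1
    · exact h2

end NCAux

section NCFin
instance NCP.finite (m : ℕ) : Finite (NCP m) := by
  have h2 : Finite (Setoid (Fin m)) := by
    apply Finite.of_injective (fun r : Setoid (Fin m) => r.r)
    intro a b h
    cases a; cases b
    congr
  exact Subtype.finite
end NCFin
section NCAux2
variable {m : ℕ}

open scoped Classical

lemma minBlk_rel (r : Setoid (Fin m)) (a : Fin m) : r (minBlk r a) a := by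
  have := Finset.min'_mem (Finset.univ.filter fun b => r b a)
    ⟨a, Finset.mem_filter.mpr ⟨Finset.mem_univ a, Setoid.refl a⟩⟩
  rw [Finset.mem_filter] at this
  exact this.2

lemma minBlk_le (r : Setoid (Fin m)) {a b : Fin m} (h : r b a) : minBlk r a ≤ b := by
  apply Finset.min'_le
  exact Finset.mem_filter.mpr ⟨Finset.mem_univ b, h⟩

lemma minBlk_le_self (r : Setoid (Fin m)) (a : Fin m) : minBlk r a ≤ a :=
  minBlk_le r (Setoid.refl a)

lemma minBlk_congr {r : Setoid (Fin m)} {a b : Fin m} (h : r a b) :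
    minBlk r a = minBlk r b := by
  apply le_antisymm
  · exact minBlk_le r (Setoid.trans' r (minBlk_rel r b) (Setoid.symm' r h))
  · exact minBlk_le r (Setoid.trans' r (minBlk_rel r a) h)

lemma minBlk_mono {μ ν : NCP m} (h : μ ≤ ν) (a : Fin m) :
    minBlk ν.1 a ≤ minBlk μ.1 a :=
  minBlk_le ν.1 (ncp_le_iff.mp h _ _ (minBlk_rel μ.1 a))

/-- `v` is the minimum of its block. -/
def IsBMin (r : Setoid (Fin m)) (v : Fin m) : Prop := minBlk r v = v

lemma isBMin_iff {r : Setoid (Fin m)} {v : Fin m} :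
    IsBMin r v ↔ ∀ b, r b v → v ≤ b := by
  constructor
  · intro h b hb
    calc v = minBlk r v := h.symm
    _ ≤ b := minBlk_le r hb
  · intro h
    exact le_antisymm (minBlk_le_self r v) (h _ (minBlk_rel r v))

lemma isBMin_anti {μ ν : NCP m} (h : μ ≤ ν) {v : Fin m} (hv : IsBMin ν.1 v) :
    IsBMin μ.1 v := by
  rw [isBMin_iff] at *
  intro b hb
  exact hv b (ncp_le_iff.mp h _ _ hb)

lemma isBMin_minBlk (r : Setoid (Fin m)) (a : Fin m) : IsBMin r (minBlk r a) := by
  unfold IsBMin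
  exact minBlk_congr (minBlk_rel r a)

lemma isBMin_bot (v : Fin m) : IsBMin (⊥ : NCP m).1 v := by
  rw [isBMin_iff]
  intro b hb
  rw [ncp_bot_iff] at hb
  exact hb.ge

/-- The set of block-minima of `x` that are not block-minima of `y`. -/
def Lset (x y : NCP m) : Set (Fin m) := {v | IsBMin x.1 v ∧ ¬ IsBMin y.1 v}

lemma Lset_union {x y z : NCP m} (h1 : x ≤ y) (h2 : y ≤ z) :
    Lset x z = Lset x y ∪ Lset y z := by
  ext v
  simp only [Lset, Set.mem_setOf_eq, Set.mem_union]
  constructor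
  · rintro ⟨ha, hb⟩
    by_cases hy : IsBMin y.1 v
    · exact Or.inr ⟨hy, hb⟩
    · exact Or.inl ⟨ha, hy⟩
  · rintro (⟨ha, hb⟩ | ⟨ha, hb⟩)
    · exact ⟨ha, fun hz => hb (isBMin_anti h2 hz)⟩
    · exact ⟨isBMin_anti h1 ha, hb⟩

lemma Lset_disjoint {x y z : NCP m} (h2 : y ≤ z) :
    Disjoint (Lset x y) (Lset y z) := by
  rw [Set.disjoint_left]
  rintro v ⟨_, hb⟩ ⟨hc, _⟩
  exact hb hc

end NCAux2
section NCAux3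
variable {m : ℕ}

/-- Merge the `μ`-blocks of `u` and `v`. -/
def mergeRel (μ : NCP m) (u v : Fin m) : Setoid (Fin m) :=
  ⟨fun x y => μ.1 x y ∨ (μ.1 x u ∧ μ.1 y v) ∨ (μ.1 x v ∧ μ.1 y u),
   ⟨fun x => Or.inl (μ.1.refl' x),
    fun {x y} h => by
      rcases h with h | ⟨h1, h2⟩ | ⟨h1, h2⟩
      · exact Or.inl (μ.1.symm' h)
      · exact Or.inr (Or.inr ⟨h2, h1⟩)
      · exact Or.inr (Or.inl ⟨h2, h1⟩),
    fun {x y z} hxy hyz => by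
      have T : ∀ {a b c : Fin m}, μ.1 a b → μ.1 b c → μ.1 a c :=
        fun hab hbc => Setoid.trans' μ.1 hab hbc
      have S : ∀ {a b : Fin m}, μ.1 a b → μ.1 b a := fun hab => Setoid.symm' μ.1 hab
      rcases hxy with h1 | ⟨h1, h2⟩ | ⟨h1, h2⟩ <;>
        rcases hyz with g1 | ⟨g1, g2⟩ | ⟨g1, g2⟩
      · exact Or.inl (T h1 g1)
      · exact Or.inr (Or.inl ⟨T h1 g1, g2⟩)
      · exact Or.inr (Or.inr ⟨T h1 g1, g2⟩)
      · exact Or.inr (Or.inl ⟨h1, T (S g1) h2⟩)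
      · exact Or.inl (T h1 (T (T (S g1) h2) (S g2)))
      · exact Or.inl (T h1 (S g2))
      · exact Or.inr (Or.inr ⟨h1, T (S g1) h2⟩)
      · exact Or.inl (T h1 (S g2))
      · exact Or.inl (T h1 (T (S g1) (T h2 (S g2))))⟩⟩

/-- The data describing a legitimate merge inside the `ν`-block of `y1`:
`c0` is the minimum of the `ν`-block of `y1`, `y1` is not `μ`-related to `c0`,
and `y1` is minimal among elements of its `ν`-block not `μ`-related to `c0`. -/
def MergeData (μ ν : NCP m) (c0 y1 : Fin m) : Prop :=
  ν.1 c0 y1 ∧ (∀ e, ν.1 e y1 → c0 ≤ e) ∧ ¬ μ.1 y1 c0 ∧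
    (∀ e, ν.1 e y1 → ¬ μ.1 e c0 → y1 ≤ e)

variable {μ ν : NCP m} {c0 y1 : Fin m}

lemma MergeData.lt (hd : MergeData μ ν c0 y1) : c0 < y1 := by
  obtain ⟨h1, h2, h3, _⟩ := hd
  rcases lt_or_eq_of_le (h2 y1 (ν.1.refl' y1)) with h | h
  · exact h
  · exact absurd (h ▸ μ.1.refl' y1) h3

/-- Elements of the block `C` smaller than `y1` are `μ`-related to `c0`. -/
lemma MergeData.small (hd : MergeData μ ν c0 y1) {e : Fin m}
    (he : ν.1 e y1) (hlt : e < y1) : μ.1 e c0 := by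
  by_contra hne
  exact absurd (hd.2.2.2 e he hne) (not_le.mpr hlt)

lemma MergeData.b0_sub (hle : μ ≤ ν) (hd : MergeData μ ν c0 y1) {e : Fin m}
    (he : μ.1 e c0) : ν.1 e y1 :=
  ν.1.trans' (ncp_le_iff.mp hle _ _ he) hd.1

lemma MergeData.b1_sub (hle : μ ≤ ν) (hd : MergeData μ ν c0 y1) {e : Fin m}
    (he : μ.1 e y1) : ν.1 e y1 :=
  ncp_le_iff.mp hle _ _ he

lemma MergeData.y1_bmin (hle : μ ≤ ν) (hd : MergeData μ ν c0 y1) :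
    IsBMin μ.1 y1 := by
  rw [isBMin_iff]
  intro b hb
  refine hd.2.2.2 b (hd.b1_sub hle hb) ?_
  intro hbc
  exact hd.2.2.1 (μ.1.trans' (μ.1.symm' hb) hbc)

lemma MergeData.c0_bmin (hle : μ ≤ ν) (hd : MergeData μ ν c0 y1) :
    IsBMin μ.1 c0 := by
  rw [isBMin_iff]
  intro b hb
  exact hd.2.1 b (hd.b0_sub hle hb)

lemma MergeData.y1_min_b1 (hle : μ ≤ ν) (hd : MergeData μ ν c0 y1) {e : Fin m}
    (he : μ.1 e y1) : y1 ≤ e := isBMin_iff.mp (hd.y1_bmin hle) e he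

lemma MergeData.noncrossing (hle : μ ≤ ν) (hd : MergeData μ ν c0 y1) :
    Noncrossing (mergeRel μ c0 y1) := by
  obtain ⟨hC, hc0min, hnrel, hy1min⟩ := id hd
  intro i j k l hij hjk hkl hik hjl
  have T : ∀ {a b c : Fin m}, μ.1 a b → μ.1 b c → μ.1 a c :=
    fun hab hbc => Setoid.trans' μ.1 hab hbc
  have S : ∀ {a b : Fin m}, μ.1 a b → μ.1 b a := fun hab => Setoid.symm' μ.1 hab
  have TN : ∀ {a b c : Fin m}, ν.1 a b → ν.1 b c → ν.1 a c :=
    fun hab hbc => Setoid.trans' ν.1 hab hbc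
  have SN : ∀ {a b : Fin m}, ν.1 a b → ν.1 b a := fun hab => Setoid.symm' ν.1 hab
  have hlev := fun {a b : Fin m} (h : μ.1 a b) => ncp_le_iff.mp hle a b h
  -- membership in C
  have memC : ∀ {a b : Fin m},
      (μ.1 a c0 ∧ μ.1 b y1) ∨ (μ.1 a y1 ∧ μ.1 b c0) → ν.1 a y1 ∧ ν.1 b y1 := by
    rintro a b (⟨h1, h2⟩ | ⟨h1, h2⟩)
    · exact ⟨hd.b0_sub hle h1, hlev h2⟩
    · exact ⟨hlev h1, hd.b0_sub hle h2⟩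
  rcases hik with hik | hikX
  · rcases hjl with hjl | hjlX
    · exact Or.inl (μ.2 i j k l hij hjk hkl hik hjl)
    · -- i,k in a μ-block D; j,l in the merged pair
      have hjC : ν.1 j y1 := (memC hjlX).1
      have hiC : ν.1 i y1 := by
        have := ν.2 i j k l hij hjk hkl (hlev hik) (TN hjC (SN (memC hjlX).2))
        exact TN this hjC
      by_cases hi0 : μ.1 i c0
      · rcases hjlX with ⟨hj, _⟩ | ⟨hj, _⟩
        · exact Or.inl (T hi0 (S hj))
        · exact Or.inr (Or.inl ⟨hi0, hj⟩)
      by_cases hi1 : μ.1 i y1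
      · rcases hjlX with ⟨hj, _⟩ | ⟨hj, _⟩
        · exact Or.inr (Or.inr ⟨hi1, hj⟩)
        · exact Or.inl (T hi1 (S hj))
      exfalso
      rcases hjlX with ⟨hj, hl⟩ | ⟨hj, hl⟩
      · -- j ∈ B0, l ∈ B1 : use pair (c0, j) against (i, k)
        have hc0i : c0 < i := by
          rcases lt_or_eq_of_le (hc0min i hiC) with h | h
          · exact h
          · exact absurd (h ▸ μ.1.refl' c0) hi0
        exact hi0 (S (μ.2 c0 i j k hc0i hij hjk (S hj) hik))
      · -- j ∈ B1, l ∈ B0 : use pair (y1, j) against (i, k)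
        rcases lt_trichotomy i y1 with h | h | h
        · exact hi0 (hd.small hiC h)
        · exact hi1 (h ▸ μ.1.refl' i)
        · exact hi1 (S (μ.2 y1 i j k h hij hjk (S hj) hik))
  · rcases hjl with hjl | hjlX
    · -- i,k in merged pair; j,l in μ-block D
      have hiC : ν.1 i y1 := (memC hikX).1
      have hkC : ν.1 k y1 := (memC hikX).2
      have hjC : ν.1 j y1 := by
        have := ν.2 i j k l hij hjk hkl (TN hiC (SN hkC)) (hlev hjl)
        exact TN (SN this) hiC
      by_cases hj0 : μ.1 j c0
      · rcases hikX with ⟨hi, _⟩ | ⟨hi, _⟩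
        · exact Or.inl (T hi (S hj0))
        · exact Or.inr (Or.inr ⟨hi, hj0⟩)
      by_cases hj1 : μ.1 j y1
      · rcases hikX with ⟨hi, _⟩ | ⟨hi, _⟩
        · exact Or.inr (Or.inl ⟨hi, hj1⟩)
        · exact Or.inl (T hi (S hj1))
      exfalso
      rcases hikX with ⟨hi, hk⟩ | ⟨hi, hk⟩
      · -- i ∈ B0, k ∈ B1 : use pair (y1, k) against (j, l)
        rcases lt_trichotomy j y1 with h | h | h
        · exact hj0 (hd.small hjC h)
        · exact hj1 (h ▸ μ.1.refl' j)
        · exact hj1 (S (μ.2 y1 j k l h hjk hkl (S hk) hjl))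
      · -- i ∈ B1, k ∈ B0 : use pair (c0, k) against (j, l)
        have hc0j : c0 < j := by
          have : y1 ≤ i := hd.y1_min_b1 hle hi
          exact lt_trans (lt_of_lt_of_le hd.lt this) hij
        exact hj0 (S (μ.2 c0 j k l hc0j hjk hkl (S hk) hjl))
    · -- both pairs inside the merged block
      rcases hikX with ⟨hi, _⟩ | ⟨hi, _⟩ <;> rcases hjlX with ⟨hj, _⟩ | ⟨hj, _⟩
      · exact Or.inl (T hi (S hj))
      · exact Or.inr (Or.inl ⟨hi, hj⟩)
      · exact Or.inr (Or.inr ⟨hi, hj⟩)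
      · exact Or.inl (T hi (S hj))

/-- The merged noncrossing partition. -/
def mergeNCP (hle : μ ≤ ν) (hd : MergeData μ ν c0 y1) : NCP m :=
  ⟨mergeRel μ c0 y1, hd.noncrossing hle⟩

lemma merge_le (hle : μ ≤ ν) (hd : MergeData μ ν c0 y1) : mergeNCP hle hd ≤ ν := by
  rw [ncp_le_iff]
  rintro x y (h | ⟨h1, h2⟩ | ⟨h1, h2⟩)
  · exact ncp_le_iff.mp hle _ _ h
  · exact ν.1.trans' (hd.b0_sub hle h1) (ν.1.symm' (ncp_le_iff.mp hle _ _ h2))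
  · exact ν.1.trans' (ncp_le_iff.mp hle _ _ h1) (ν.1.symm' (hd.b0_sub hle h2))

lemma merge_gt (hle : μ ≤ ν) (hd : MergeData μ ν c0 y1) : μ < mergeNCP hle hd := by
  apply lt_of_le_of_ne
  · rw [ncp_le_iff]
    intro x y h
    exact Or.inl h
  · intro h
    have : (mergeNCP hle hd).1 c0 y1 := Or.inr (Or.inl ⟨μ.1.refl' c0, μ.1.refl' y1⟩)
    rw [← h] at this
    exact hd.2.2.1 (μ.1.symm' this)

lemma merge_covby (hle : μ ≤ ν) (hd : MergeData μ ν c0 y1) : μ ⋖ mergeNCP hle hd := by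
  refine ⟨merge_gt hle hd, ?_⟩
  intro z hz1 hz2
  -- z strictly between is impossible: show mergeNCP ≤ z
  obtain ⟨x0, y0, hzx, hmx⟩ : ∃ x0 y0, z.1 x0 y0 ∧ ¬ μ.1 x0 y0 := by
    by_contra hcon
    push_neg at hcon
    exact absurd (ncp_le_iff.mpr fun x y h => hcon x y h) (not_le_of_gt hz1)
  have hzle : z ≤ mergeNCP hle hd := le_of_lt hz2
  have hx0 : (mergeNCP hle hd).1 x0 y0 := ncp_le_iff.mp hzle _ _ hzx
  have T : ∀ {a b c : Fin m}, z.1 a b → z.1 b c → z.1 a c :=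
    fun hab hbc => Setoid.trans' z.1 hab hbc
  have hμz := fun {a b : Fin m} (h : μ.1 a b) => ncp_le_iff.mp (le_of_lt hz1) a b h
  have Sz : ∀ {a b : Fin m}, z.1 a b → z.1 b a := fun hab => Setoid.symm' z.1 hab
  have Tm : ∀ {a b c : Fin m}, μ.1 a b → μ.1 b c → μ.1 a c :=
    fun hab hbc => Setoid.trans' μ.1 hab hbc
  have Sm : ∀ {a b : Fin m}, μ.1 a b → μ.1 b a := fun hab => Setoid.symm' μ.1 hab
  have key : ∀ u v : Fin m, μ.1 u c0 → μ.1 v y1 → z.1 u v := by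
    rcases hx0 with h | ⟨h1, h2⟩ | ⟨h1, h2⟩
    · exact absurd h hmx
    · intro u v hu hv
      exact T (T (hμz (Tm hu (Sm h1))) hzx) (hμz (Tm h2 (Sm hv)))
    · intro u v hu hv
      exact T (T (hμz (Tm hu (Sm h2))) (Sz hzx)) (hμz (Tm h1 (Sm hv)))
  have : mergeNCP hle hd ≤ z := by
    rw [ncp_le_iff]
    rintro u v (h | ⟨g1, g2⟩ | ⟨g1, g2⟩)
    · exact hμz h
    · exact key u v g1 g2
    · exact Sz (key v u g2 g1)
  exact absurd (lt_of_lt_of_le hz2 this) (lt_irrefl _)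

lemma merge_bmin_iff (hle : μ ≤ ν) (hd : MergeData μ ν c0 y1) (v : Fin m) :
    IsBMin (mergeNCP hle hd).1 v ↔ IsBMin μ.1 v ∧ v ≠ y1 := by
  constructor
  · intro h
    constructor
    · rw [isBMin_iff] at *
      intro b hb
      exact h b (Or.inl hb)
    · rintro rfl
      rw [isBMin_iff] at h
      have : v ≤ c0 := h c0 (Or.inr (Or.inl ⟨μ.1.refl' c0, μ.1.refl' v⟩))
      exact absurd this (not_le.mpr hd.lt)
  · rintro ⟨h, hne⟩
    rw [isBMin_iff] at *
    rintro b (hb | ⟨hb1, hb2⟩ | ⟨hb1, hb2⟩)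
    · exact h b hb
    · -- v ∈ B1 means v = y1, contradiction
      exact absurd (le_antisymm (h y1 (μ.1.symm' hb2)) (hd.y1_min_b1 hle hb2)) hne
    · -- v ∈ B0, v min, so v = c0 ≤ y1 ≤ b
      have hvc : v = c0 :=
        le_antisymm (h c0 (μ.1.symm' hb2)) (hd.2.1 v (hd.b0_sub hle hb2))
      calc v ≤ y1 := hvc ▸ le_of_lt hd.lt
      _ ≤ b := hd.y1_min_b1 hle hb1

lemma merge_Lset (hle : μ ≤ ν) (hd : MergeData μ ν c0 y1) :
    Lset μ (mergeNCP hle hd) = {y1} := by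
  ext v
  simp only [Lset, Set.mem_setOf_eq, Set.mem_singleton_iff, merge_bmin_iff hle hd]
  constructor
  · rintro ⟨h1, h2⟩
    by_contra hne
    exact h2 ⟨h1, hne⟩
  · rintro rfl
    exact ⟨hd.y1_bmin hle, fun h => h.2 rfl⟩

end NCAux3
section NCAux4
variable {m : ℕ}

open scoped Classical

lemma exists_pair_of_lt {μ ν : NCP m} (h : μ < ν) :
    ∃ x0 y0 : Fin m, ν.1 x0 y0 ∧ ¬ μ.1 x0 y0 := by
  by_contra hcon
  push_neg at hcon
  exact absurd (ncp_le_iff.mpr fun x y hx => hcon x y hx) (not_le_of_gt h)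

/-- Merge data exists below any strict inequality, with the merged element `y1`
being any prescribed minimum of `Lset μ ν` if desired. -/
lemma exists_mergeData_at {μ ν : NCP m} (hle : μ ≤ ν) (w : Fin m)
    (hw : ∃ e, ν.1 e w ∧ ¬ μ.1 e (minBlk ν.1 w)) :
    ∃ y1, MergeData μ ν (minBlk ν.1 w) y1 ∧ ν.1 y1 w := by
  set c0 := minBlk ν.1 w with hc0
  obtain ⟨e0, he0⟩ := hw
  have hne : (Finset.univ.filter fun e => ν.1 e w ∧ ¬ μ.1 e c0).Nonempty :=
    ⟨e0, Finset.mem_filter.mpr ⟨Finset.mem_univ _, he0⟩⟩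
  set y1 := (Finset.univ.filter fun e => ν.1 e w ∧ ¬ μ.1 e c0).min' hne with hy1
  have hy1mem := Finset.min'_mem _ hne
  rw [← hy1, Finset.mem_filter] at hy1mem
  obtain ⟨-, hy1w, hy1c0⟩ := hy1mem
  have hcw : ν.1 c0 w := minBlk_rel ν.1 w
  refine ⟨y1, ⟨ν.1.trans' hcw (ν.1.symm' hy1w), ?_, hy1c0, ?_⟩, hy1w⟩
  · intro e he
    exact minBlk_le ν.1 (ν.1.trans' he hy1w)
  · intro e he hec
    exact Finset.min'_le _ _ (Finset.mem_filter.mpr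
      ⟨Finset.mem_univ _, ν.1.trans' he hy1w, hec⟩)

lemma exists_mergeData {μ ν : NCP m} (h : μ < ν) :
    ∃ c0 y1, MergeData μ ν c0 y1 := by
  obtain ⟨x0, y0, hxy, hnxy⟩ := exists_pair_of_lt h
  set c0 := minBlk ν.1 x0 with hc0
  have hw : ∃ e, ν.1 e x0 ∧ ¬ μ.1 e c0 := by
    by_cases hx : μ.1 x0 c0
    · refine ⟨y0, ν.1.symm' hxy, fun hy => ?_⟩
      exact hnxy (μ.1.trans' hx (μ.1.symm' hy))
    · exact ⟨x0, ν.1.refl' x0, hx⟩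
  obtain ⟨y1, hd, -⟩ := exists_mergeData_at h.le x0 hw
  exact ⟨c0, y1, hd⟩

lemma MergeData.y1_mem_Lset {μ ν : NCP m} (hle : μ ≤ ν) {c0 y1 : Fin m}
    (hd : MergeData μ ν c0 y1) : y1 ∈ Lset μ ν := by
  refine ⟨hd.y1_bmin hle, fun h => ?_⟩
  have h1 : minBlk ν.1 y1 ≤ c0 := minBlk_le ν.1 hd.1
  rw [h] at h1
  exact absurd h1 (not_le.mpr hd.lt)

lemma lset_nonempty {μ ν : NCP m} (h : μ < ν) : (Lset μ ν).Nonempty := by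
  obtain ⟨c0, y1, hd⟩ := exists_mergeData h
  exact ⟨y1, hd.y1_mem_Lset h.le⟩

lemma eq_of_lset_empty {μ ν : NCP m} (hle : μ ≤ ν) (h : Lset μ ν = ∅) : μ = ν := by
  rcases lt_or_eq_of_le hle with hlt | heq
  · obtain ⟨v, hv⟩ := lset_nonempty hlt
    rw [h] at hv
    exact absurd hv (Set.notMem_empty v)
  · exact heq

/-- Merge data with prescribed merged element `ℓ`, the minimum of `Lset μ ν`. -/
lemma exists_mergeData_min {μ ν : NCP m} (hlt : μ < ν) {ℓ : Fin m}
    (hℓ : ℓ ∈ Lset μ ν) (hmin : ∀ v ∈ Lset μ ν, ℓ ≤ v) :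
    ∃ c0, MergeData μ ν c0 ℓ := by
  set c0 := minBlk ν.1 ℓ with hc0
  have hc0lt : c0 < ℓ := by
    rcases lt_or_eq_of_le (minBlk_le_self ν.1 ℓ) with h | h
    · exact h
    · exact absurd h hℓ.2
  have hw : ∃ e, ν.1 e ℓ ∧ ¬ μ.1 e c0 := by
    refine ⟨ℓ, ν.1.refl' ℓ, fun hlc => ?_⟩
    have : ℓ ≤ c0 := isBMin_iff.mp hℓ.1 c0 (μ.1.symm' hlc)
    exact absurd this (not_le.mpr hc0lt)
  obtain ⟨y1, hd, hy1l⟩ := exists_mergeData_at hlt.le ℓ hw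
  have hyeq : y1 = ℓ := by
    apply le_antisymm
    · exact hd.2.2.2 ℓ (ν.1.symm' hy1l) (fun hlc =>
        absurd (isBMin_iff.mp hℓ.1 c0 (μ.1.symm' hlc)) (not_le.mpr hc0lt))
    · exact hmin y1 (hd.y1_mem_Lset hlt.le)
  exact ⟨c0, hyeq ▸ hd⟩

lemma cover_eq_merge {μ ν : NCP m} (h : μ ⋖ ν) :
    ∃ (c0 y1 : Fin m) (hd : MergeData μ ν c0 y1), ν = mergeNCP h.1.le hd := by
  obtain ⟨c0, y1, hd⟩ := exists_mergeData h.1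
  refine ⟨c0, y1, hd, ?_⟩
  rcases lt_or_eq_of_le (merge_le h.1.le hd) with hlt | heq
  · exact absurd hlt (h.2 (merge_gt h.1.le hd))
  · exact heq.symm

lemma cover_Lset {μ ν : NCP m} (h : μ ⋖ ν) : ∃ y1 : Fin m, Lset μ ν = {y1} := by
  obtain ⟨c0, y1, hd, hev⟩ := cover_eq_merge h
  refine ⟨y1, ?_⟩
  conv_lhs => rw [hev]
  exact merge_Lset h.1.le hd

end NCAux4
section NCAux5
variable {n : ℕ}

open scoped Classical

/-- The label value (the lost block-minimum) of a covering step. -/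
noncomputable def labval (μ ν : NCP (n + 1)) : Fin (n + 1) :=
  if h : ∃ v, Lset μ ν = {v} then h.choose else 0

lemma labval_spec {μ ν : NCP (n + 1)} (h : μ ⋖ ν) : Lset μ ν = {labval μ ν} := by
  have hex := cover_Lset h
  rw [labval, dif_pos hex]
  exact hex.choose_spec

lemma labval_mem {μ ν : NCP (n + 1)} (h : μ ⋖ ν) : labval μ ν ∈ Lset μ ν := by
  rw [labval_spec h]; rfl

/- Basic saturated-chain facts -/

lemma sat_step_le {P : Type*} [PartialOrder P] {k : ℕ} {c : ℕ → P} {x y : P}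
    (h : IsSatChain k c x y) (j : ℕ) : c j ≤ c (j + 1) := by
  rcases lt_or_ge j k with hj | hj
  · exact (h.2.2 j hj).1.le
  · rw [h.2.1 j hj, h.2.1 (j+1) (le_trans hj (Nat.le_succ j))]

lemma sat_mono {P : Type*} [PartialOrder P] {k : ℕ} {c : ℕ → P} {x y : P}
    (h : IsSatChain k c x y) {i j : ℕ} (hij : i ≤ j) : c i ≤ c j := by
  induction j with
  | zero => rw [Nat.le_zero.mp hij]
  | succ j ih =>
      rcases Nat.lt_or_ge i (j+1) with hij' | hij'
      · exact le_trans (ih (Nat.lt_succ_iff.mp hij')) (sat_step_le h j)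
      · rw [le_antisymm hij hij']

lemma sat_le_y {P : Type*} [PartialOrder P] {k : ℕ} {c : ℕ → P} {x y : P}
    (h : IsSatChain k c x y) (j : ℕ) : c j ≤ y := by
  rcases le_total j k with hj | hj
  · rw [← h.2.1 k le_rfl]; exact sat_mono h hj
  · rw [h.2.1 j hj]

lemma sat_x_le {P : Type*} [PartialOrder P] {k : ℕ} {c : ℕ → P} {x y : P}
    (h : IsSatChain k c x y) (j : ℕ) : x ≤ c j := by
  rw [← h.1]; exact sat_mono h (Nat.zero_le j)

lemma sat_shift {P : Type*} [PartialOrder P] {k : ℕ} {c : ℕ → P} {x y : P}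
    (h : IsSatChain (k + 1) c x y) : IsSatChain k (fun j => c (j + 1)) (c 1) y :=
  ⟨rfl, fun j hj => h.2.1 (j+1) (Nat.succ_le_succ hj),
   fun j hj => h.2.2 (j+1) (Nat.succ_lt_succ hj)⟩

lemma Lset_sub {x a b y : NCP (n + 1)} (h1 : x ≤ a) (h2 : a ≤ b) (h3 : b ≤ y) :
    Lset a b ⊆ Lset x y := by
  rw [Lset_union h1 (le_trans h2 h3), Lset_union h2 h3]
  intro v hv
  exact Set.mem_union_right _ (Set.mem_union_left _ hv)

lemma Lset_self (x : NCP (n + 1)) : Lset x x = ∅ := by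
  ext v
  simp only [Lset, Set.mem_setOf_eq, Set.mem_empty_iff_false, iff_false, not_and, not_not]
  exact fun h => h

lemma chain_card {k : ℕ} {c : ℕ → NCP (n + 1)} {x y : NCP (n + 1)}
    (h : IsSatChain k c x y) : (Lset x y).ncard = k := by
  induction k generalizing c x y with
  | zero =>
      have hx : x = y := by rw [← h.1, h.2.1 0 le_rfl]
      rw [hx, Lset_self, Set.ncard_empty]
  | succ k ih =>
      have h0 : x ⋖ c 1 := h.1 ▸ h.2.2 0 (Nat.succ_pos k)
      have hrest := ih (sat_shift h)
      rw [Lset_union h0.1.le (sat_le_y (sat_shift h) 0),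
        Set.ncard_union_eq (Lset_disjoint (sat_le_y (sat_shift h) 0))
          (Set.toFinite _) (Set.toFinite _),
        labval_spec h0, Set.ncard_singleton, hrest, Nat.add_comm]

lemma chain_mem_Lset {k : ℕ} {c : ℕ → NCP (n + 1)} {x y : NCP (n + 1)}
    (h : IsSatChain k c x y) (v : Fin (n + 1)) :
    v ∈ Lset x y ↔ ∃ j, j < k ∧ labval (c j) (c (j + 1)) = v := by
  induction k generalizing c x y with
  | zero =>
      have hx : x = y := by rw [← h.1, h.2.1 0 le_rfl]
      rw [hx, Lset_self]
      simp
  | succ k ih =>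
      have h0 : x ⋖ c 1 := h.1 ▸ h.2.2 0 (Nat.succ_pos k)
      rw [Lset_union h0.1.le (sat_le_y (sat_shift h) 0)]
      constructor
      · rintro (hv | hv)
        · refine ⟨0, Nat.succ_pos k, ?_⟩
          rw [labval_spec h0] at hv
          rw [h.1]
          exact hv.symm
        · obtain ⟨j, hj, hv⟩ := (ih (sat_shift h)).mp hv
          exact ⟨j + 1, Nat.succ_lt_succ hj, hv⟩
      · rintro ⟨j, hj, hv⟩
        rcases Nat.eq_zero_or_pos j with rfl | hjpos
        · left
          rw [← hv, h.1, labval_spec h0]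
          rfl
        · right
          obtain ⟨j', rfl⟩ : ∃ j'', j = j'' + 1 := ⟨j - 1, by omega⟩
          exact (ih (sat_shift h)).mpr ⟨j', by omega, hv⟩

lemma chain_labels_distinct {k : ℕ} {c : ℕ → NCP (n + 1)} {x y : NCP (n + 1)}
    (h : IsSatChain k c x y) {j1 j2 : ℕ} (hlt : j1 < j2) (hk : j2 < k) :
    labval (c j1) (c (j1 + 1)) ≠ labval (c j2) (c (j2 + 1)) := by
  intro heq
  have hc1 : c j1 ⋖ c (j1 + 1) := h.2.2 j1 (lt_trans hlt hk)
  have hc2 : c j2 ⋖ c (j2 + 1) := h.2.2 j2 hk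
  have h1 : ¬ IsBMin (c (j1 + 1)).1 (labval (c j1) (c (j1 + 1))) := (labval_mem hc1).2
  have h2 : IsBMin (c j2).1 (labval (c j2) (c (j2 + 1))) := (labval_mem hc2).1
  rw [← heq] at h2
  exact h1 (isBMin_anti (sat_mono h hlt) h2)

end NCAux5
section NCAux6
variable {n : ℕ}

open scoped Classical

lemma min_cover_unique {z y ρ1 ρ2 : NCP (n + 1)} {ℓ : Fin (n + 1)}
    (h1 : z ⋖ ρ1) (h2 : z ⋖ ρ2) (hy1 : ρ1 ≤ y) (hy2 : ρ2 ≤ y)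
    (hL1 : Lset z ρ1 = {ℓ}) (hL2 : Lset z ρ2 = {ℓ})
    (hmin : ∀ v ∈ Lset z y, ℓ ≤ v) : ρ1 = ρ2 := by
  obtain ⟨c1, y1, hd1, he1⟩ := cover_eq_merge h1
  obtain ⟨c2, y2, hd2, he2⟩ := cover_eq_merge h2
  have hy1e : y1 = ℓ := by
    have := (merge_Lset h1.1.le hd1) ▸ (he1 ▸ hL1)
    exact Set.singleton_eq_singleton_iff.mp this
  have hy2e : y2 = ℓ := by
    have := (merge_Lset h2.1.le hd2) ▸ (he2 ▸ hL2)
    exact Set.singleton_eq_singleton_iff.mp this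
  have hρ1 : ρ1.1 c1 y1 := by
    rw [he1]; exact Or.inr (Or.inl ⟨z.1.refl' c1, z.1.refl' y1⟩)
  have hρ2 : ρ2.1 c2 y2 := by
    rw [he2]; exact Or.inr (Or.inl ⟨z.1.refl' c2, z.1.refl' y2⟩)
  have hyc1 : y.1 c1 ℓ := hy1e ▸ ncp_le_iff.mp hy1 _ _ hρ1
  have hyc2 : y.1 c2 ℓ := hy2e ▸ ncp_le_iff.mp hy2 _ _ hρ2
  have hlt1 : c1 < ℓ := hy1e ▸ hd1.lt
  have hlt2 : c2 < ℓ := hy2e ▸ hd2.lt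
  have key : ∀ a b : Fin (n + 1), y.1 a ℓ → y.1 b ℓ → IsBMin z.1 b → b < ℓ →
      a < b → False := by
    intro a b hya hyb hbm hbl hab
    have hmem : b ∈ Lset z y := by
      refine ⟨hbm, fun hmin' => ?_⟩
      have : minBlk y.1 b ≤ a := minBlk_le y.1 (y.1.trans' hya (y.1.symm' hyb))
      rw [hmin'] at this
      exact absurd this (not_le.mpr hab)
    exact absurd (hmin b hmem) (not_le.mpr hbl)
  have hceq : c1 = c2 := by
    rcases lt_trichotomy c1 c2 with h | h | h
    · exact absurd (key c1 c2 hyc1 hyc2 (hd2.c0_bmin h2.1.le) hlt2 h) id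
    · exact h
    · exact absurd (key c2 c1 hyc2 hyc1 (hd1.c0_bmin h1.1.le) hlt1 h) id
  apply Subtype.ext
  rw [he1, he2]
  show mergeRel z c1 y1 = mergeRel z c2 y2
  rw [hy1e, hy2e, hceq]

/-- One greedy step: the unique minimal-label cover. -/
lemma greedy_cover {z y : NCP (n + 1)} (hlt : z < y) :
    ∃ ρ, (z ⋖ ρ) ∧ ρ ≤ y ∧ ∃ ℓ, Lset z ρ = {ℓ} ∧ ℓ ∈ Lset z y ∧
      ∀ v ∈ Lset z y, ℓ ≤ v := by
  obtain ⟨ℓ, hℓmem, hℓmin⟩ := Set.exists_min_image (Lset z y) id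
    (Set.toFinite _) (lset_nonempty hlt)
  obtain ⟨c0, hd⟩ := exists_mergeData_min hlt hℓmem hℓmin
  exact ⟨mergeNCP hlt.le hd, merge_covby hlt.le hd, merge_le hlt.le hd,
    ℓ, merge_Lset hlt.le hd, hℓmem, hℓmin⟩

noncomputable def gstep (y z : NCP (n + 1)) : NCP (n + 1) :=
  if h : z < y then (greedy_cover h).choose else y

noncomputable def gchain (x y : NCP (n + 1)) : ℕ → NCP (n + 1)
  | 0 => x
  | j + 1 => gstep y (gchain x y j)

lemma gstep_spec {z y : NCP (n + 1)} (h : z < y) :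
    (z ⋖ gstep y z) ∧ gstep y z ≤ y ∧ ∃ ℓ, Lset z (gstep y z) = {ℓ} ∧
      ℓ ∈ Lset z y ∧ ∀ v ∈ Lset z y, ℓ ≤ v := by
  rw [gstep, dif_pos h]
  exact (greedy_cover h).choose_spec

lemma gchain_invar {x y : NCP (n + 1)} (hxy : x ≤ y) (j : ℕ) :
    gchain x y j ≤ y ∧ (Lset (gchain x y j) y).ncard = (Lset x y).ncard - j := by
  induction j with
  | zero =>
      refine ⟨hxy, ?_⟩
      show (Lset x y).ncard = (Lset x y).ncard - 0
      rw [Nat.sub_zero]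
  | succ j ih =>
      obtain ⟨hle, hcard⟩ := ih
      rcases lt_or_eq_of_le hle with hlt | heq
      · obtain ⟨hcov, hley, ℓ, hsing, hmem, -⟩ := gstep_spec hlt
        refine ⟨hley, ?_⟩
        have hdecomp := Lset_union hcov.1.le hley
        have : (Lset (gchain x y j) y).ncard
            = 1 + (Lset (gchain x y (j+1)) y).ncard := by
          rw [hdecomp, Set.ncard_union_eq (Lset_disjoint hley)
            (Set.toFinite _) (Set.toFinite _)]
          show (Lset (gchain x y j) (gstep y (gchain x y j))).ncard + _ = _
          rw [hsing, Set.ncard_singleton]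
          rfl
        omega
      · have hstep : gchain x y (j+1) = y := by
          show gstep y (gchain x y j) = y
          rw [gstep, dif_neg (show ¬ gchain x y j < y by rw [heq]; exact lt_irrefl y)]
        refine ⟨hstep.le, ?_⟩
        have h0 : (Lset (gchain x y j) y).ncard = 0 := by
          rw [heq, Lset_self, Set.ncard_empty]
        rw [hstep, Lset_self, Set.ncard_empty]
        omega

lemma gchain_sat {x y : NCP (n + 1)} (hxy : x ≤ y) :
    IsSatChain ((Lset x y).ncard) (gchain x y) x y := by
  set k := (Lset x y).ncard with hk
  have hky : gchain x y k = y := by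
    have h := gchain_invar hxy k
    have : (Lset (gchain x y k) y).ncard = 0 := by omega
    exact eq_of_lset_empty (gchain_invar hxy k).1
      ((Set.ncard_eq_zero (Set.toFinite _)).mp this)
  refine ⟨rfl, ?_, ?_⟩
  · intro j hj
    obtain ⟨j', rfl⟩ := Nat.exists_eq_add_of_le hj
    induction j' with
    | zero => exact hky
    | succ j' ih =>
        have : gchain x y (k + j' + 1) = gstep y (gchain x y (k + j')) := rfl
        rw [show k + (j' + 1) = (k + j') + 1 by omega]
        show gstep y (gchain x y (k + j')) = y
        rw [ih (by omega), gstep, dif_neg (lt_irrefl y)]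
  · intro j hj
    have h := gchain_invar hxy j
    have hne : gchain x y j ≠ y := by
      intro heq
      rw [heq, Lset_self, Set.ncard_empty] at h
      omega
    exact (gstep_spec (lt_of_le_of_ne h.1 hne)).1

lemma gchain_label_min {x y : NCP (n + 1)} (hxy : x ≤ y) {j : ℕ}
    (hj : j < (Lset x y).ncard) :
    labval (gchain x y j) (gchain x y (j + 1)) ∈ Lset (gchain x y j) y ∧
      ∀ v ∈ Lset (gchain x y j) y, labval (gchain x y j) (gchain x y (j + 1)) ≤ v := by
  have h := gchain_invar hxy j
  have hne : gchain x y j ≠ y := by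
    intro heq
    rw [heq, Lset_self, Set.ncard_empty] at h
    omega
  have hlt := lt_of_le_of_ne h.1 hne
  obtain ⟨hcov, hley, ℓ, hsing, hmem, hmin⟩ := gstep_spec hlt
  have : labval (gchain x y j) (gchain x y (j + 1)) = ℓ := by
    have := labval_spec hcov
    show labval (gchain x y j) (gstep y (gchain x y j)) = ℓ
    rw [hsing] at this
    exact (Set.singleton_eq_singleton_iff.mp this).symm
  rw [this]
  exact ⟨hmem, hmin⟩

lemma gchain_incr {x y : NCP (n + 1)} (hxy : x ≤ y) {j : ℕ}
    (hj : j + 1 < (Lset x y).ncard) :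
    labval (gchain x y j) (gchain x y (j + 1)) ≤
      labval (gchain x y (j + 1)) (gchain x y (j + 2)) := by
  obtain ⟨-, hmin⟩ := gchain_label_min hxy (Nat.lt_of_succ_lt hj)
  obtain ⟨hmem, -⟩ := gchain_label_min hxy hj
  have hsat := gchain_sat hxy
  have hsub : Lset (gchain x y (j + 1)) y ⊆ Lset (gchain x y j) y :=
    Lset_sub (sat_step_le hsat j) (sat_le_y hsat (j+1)) le_rfl
  exact hmin _ (hsub hmem)

end NCAux6
section NCAux7
variable {n : ℕ}

open scoped Classical

/-- Weakly increasing label words (on the level of `labval`). -/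
def LabMono {n : ℕ} (k : ℕ) (c : ℕ → NCP (n + 1)) : Prop :=
  ∀ j, j + 1 < k → labval (c j) (c (j + 1)) ≤ labval (c (j + 1)) (c (j + 2))

lemma labMono_le {k : ℕ} {c : ℕ → NCP (n + 1)} (h : LabMono k c) {i j : ℕ}
    (hij : i ≤ j) (hj : j < k) :
    labval (c i) (c (i + 1)) ≤ labval (c j) (c (j + 1)) := by
  induction j with
  | zero => rw [Nat.le_zero.mp hij]
  | succ j ih =>
      rcases Nat.lt_or_ge i (j+1) with hij' | hij'
      · exact le_trans (ih (Nat.lt_succ_iff.mp hij') (by omega)) (h j hj)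
      · rw [le_antisymm hij hij']

lemma labMono_first_min {k : ℕ} {c : ℕ → NCP (n + 1)} {x y : NCP (n + 1)}
    (hsat : IsSatChain (k + 1) c x y) (hmono : LabMono (k + 1) c) :
    ∀ v ∈ Lset x y, labval (c 0) (c 1) ≤ v := by
  intro v hv
  obtain ⟨j, hj, rfl⟩ := (chain_mem_Lset hsat v).mp hv
  exact labMono_le hmono (Nat.zero_le j) hj

lemma incr_unique : ∀ (k : ℕ) (c d : ℕ → NCP (n + 1)) (x y : NCP (n + 1)),
    IsSatChain k c x y → LabMono k c → IsSatChain k d x y → LabMono k d → c = d := by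
  intro k
  induction k with
  | zero =>
      intro c d x y hc _ hd _
      funext j
      rw [hc.2.1 j (Nat.zero_le j), hd.2.1 j (Nat.zero_le j)]
  | succ k ih =>
      intro c d x y hc hcm hd hdm
      have hx : c 0 = x := hc.1
      subst hx
      have hc0 : c 0 ⋖ c 1 := hc.2.2 0 (Nat.succ_pos k)
      have hd0 : c 0 ⋖ d 1 := by
        have := hd.2.2 0 (Nat.succ_pos k)
        rw [hd.1] at this
        exact this
      -- the two first labels are both the minimum of Lset x y, hence equal covers
      have hceq : c 1 = d 1 := by
        have hcmem : labval (c 0) (c 1) ∈ Lset (c 0) y :=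
          (chain_mem_Lset hc _).mpr ⟨0, Nat.succ_pos k, rfl⟩
        have hdmem : labval (d 0) (d 1) ∈ Lset (c 0) y :=
          (chain_mem_Lset hd _).mpr ⟨0, Nat.succ_pos k, rfl⟩
        have h1 := labMono_first_min hc hcm _ hdmem
        have h2 := labMono_first_min hd hdm _ hcmem
        have heq : labval (c 0) (c 1) = labval (d 0) (d 1) := le_antisymm h1 h2
        have hs1 : Lset (c 0) (c 1) = {labval (c 0) (c 1)} := labval_spec hc0
        have hs2 : Lset (c 0) (d 1) = {labval (c 0) (c 1)} := by
          rw [labval_spec hd0, heq, hd.1]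
        exact min_cover_unique hc0 hd0 (sat_le_y hc 1) (sat_le_y hd 1) hs1 hs2
          (labMono_first_min hc hcm)
      have htail := ih (fun j => c (j+1)) (fun j => d (j+1)) (c 1) y
        (sat_shift hc) (fun j hj => hcm (j+1) (by omega))
        (hceq ▸ sat_shift hd) (fun j hj => hdm (j+1) (by omega))
      funext j
      rcases Nat.eq_zero_or_pos j with rfl | hj
      · rw [hd.1]
      · obtain ⟨j', rfl⟩ : ∃ j'', j = j'' + 1 := ⟨j - 1, by omega⟩
        exact congrFun htail j'

lemma lex_lemma {k : ℕ} {c d : ℕ → NCP (n + 1)} {x y : NCP (n + 1)}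
    (hc : IsSatChain k c x y) (hcm : LabMono k c)
    (hd : IsSatChain k d x y) (hne : c ≠ d) :
    ∃ i, i < k ∧ (∀ j, j < i → labval (c j) (c (j + 1)) = labval (d j) (d (j + 1))) ∧
      labval (c i) (c (i + 1)) < labval (d i) (d (i + 1)) := by
  have hex : ∃ j, j < k ∧ labval (c j) (c (j + 1)) ≠ labval (d j) (d (j + 1)) := by
    by_contra hcon
    push_neg at hcon
    -- all labels equal: then d is increasing, hence d = c
    have hdm : LabMono k d := by
      intro j hj
      rw [← hcon j (by omega), ← hcon (j+1) hj]
      exact hcm j hj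
    exact hne (incr_unique k c d x y hc hcm hd hdm)
  classical
  let i := Nat.find hex
  obtain ⟨hik, hine⟩ : i < k ∧ labval (c i) (c (i + 1)) ≠ labval (d i) (d (i + 1)) :=
    Nat.find_spec hex
  have hbefore : ∀ j, j < i → labval (c j) (c (j + 1)) = labval (d j) (d (j + 1)) := by
    intro j hj
    by_contra hne'
    exact Nat.find_min hex hj ⟨by omega, hne'⟩
  refine ⟨i, hik, hbefore, ?_⟩
  -- w := d's label at i lies in Lset x y, is none of the earlier labels,
  -- hence equals some c-label at index ≥ i, and so is > c's label at i
  have hwmem : labval (d i) (d (i + 1)) ∈ Lset x y :=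
    (chain_mem_Lset hd _).mpr ⟨i, hik, rfl⟩
  obtain ⟨j0, hj0k, hj0⟩ := (chain_mem_Lset hc _).mp hwmem
  have hj0i : i ≤ j0 := by
    by_contra hlt
    push_neg at hlt
    have := hbefore j0 hlt
    rw [hj0] at this
    exact chain_labels_distinct hd hlt hik this.symm
  rcases lt_or_eq_of_le hj0i with hlt | heq
  · have := labMono_le hcm hj0i hj0k
    rw [hj0] at this
    rcases lt_or_eq_of_le this with h | h
    · exact h
    · exact absurd h hine
  · rw [← heq] at hj0
    exact absurd hj0 hine

end NCAux7
section NCAux8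
variable {n : ℕ}

open scoped Classical

/-- The prefix partition `{0,…,a} | singletons`. -/
def prefRel (m a : ℕ) : Setoid (Fin m) :=
  ⟨fun x y => x = y ∨ ((x : ℕ) ≤ a ∧ (y : ℕ) ≤ a),
   ⟨fun x => Or.inl rfl,
    fun {x y} h => by
      rcases h with rfl | ⟨h1, h2⟩
      · exact Or.inl rfl
      · exact Or.inr ⟨h2, h1⟩,
    fun {x y z} hxy hyz => by
      rcases hxy with rfl | ⟨h1, h2⟩
      · exact hyz
      · rcases hyz with rfl | ⟨g1, g2⟩
        · exact Or.inr ⟨h1, h2⟩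
        · exact Or.inr ⟨h1, g2⟩⟩⟩

def prefNCP (m a : ℕ) : NCP m :=
  ⟨prefRel m a, by
    intro i j k l hij hjk hkl hik hjl
    rcases hik with rfl | ⟨h1, h2⟩
    · exact absurd (hij.trans hjk) (lt_irrefl i)
    rcases hjl with rfl | ⟨g1, g2⟩
    · exact absurd (hjk.trans hkl) (lt_irrefl j)
    exact Or.inr ⟨h1, g1⟩⟩

lemma prefNCP_rel {m a : ℕ} (x y : Fin m) :
    (prefNCP m a).1 x y ↔ x = y ∨ ((x : ℕ) ≤ a ∧ (y : ℕ) ≤ a) := Iff.rfl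

lemma prefNCP_zero : prefNCP (n + 1) 0 = (⊥ : NCP (n + 1)) := by
  apply ncp_ext
  intro x y
  rw [prefNCP_rel, ncp_bot_iff]
  constructor
  · rintro (rfl | ⟨h1, h2⟩)
    · rfl
    · exact Fin.ext (by omega)
  · rintro rfl
    exact Or.inl rfl

lemma prefNCP_top {a : ℕ} (ha : n ≤ a) : prefNCP (n + 1) a = (⊤ : NCP (n + 1)) := by
  apply ncp_ext
  intro x y
  rw [prefNCP_rel, ncp_top_iff]
  constructor
  · intro _; trivial
  · intro _
    exact Or.inr ⟨le_trans (Nat.lt_succ_iff.mp x.2) ha, le_trans (Nat.lt_succ_iff.mp y.2) ha⟩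

/-- The join `M_a ⊔ ν`, explicitly: merge all blocks meeting the prefix. -/
def pjoinRel (a : ℕ) (ν : NCP (n + 1)) : Setoid (Fin (n + 1)) :=
  ⟨fun x y => ν.1 x y ∨ ((minBlk ν.1 x : ℕ) ≤ a ∧ (minBlk ν.1 y : ℕ) ≤ a),
   ⟨fun x => Or.inl (ν.1.refl' x),
    fun {x y} h => by
      rcases h with h | ⟨h1, h2⟩
      · exact Or.inl (ν.1.symm' h)
      · exact Or.inr ⟨h2, h1⟩,
    fun {x y z} hxy hyz => by
      rcases hxy with h | ⟨h1, h2⟩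
      · rcases hyz with g | ⟨g1, g2⟩
        · exact Or.inl (ν.1.trans' h g)
        · exact Or.inr ⟨minBlk_congr h ▸ g1, g2⟩
      · rcases hyz with g | ⟨g1, g2⟩
        · exact Or.inr ⟨h1, (minBlk_congr g).symm ▸ h2⟩
        · exact Or.inr ⟨h1, g2⟩⟩⟩

lemma pjoin_noncrossing (a : ℕ) (ν : NCP (n + 1)) : Noncrossing (pjoinRel a ν) := by
  intro i j k l hij hjk hkl hik hjl
  rcases hik with hik | ⟨hbi, hbk⟩
  · rcases hjl with hjl | ⟨hbj, hbl⟩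
    · exact Or.inl (ν.2 i j k l hij hjk hkl hik hjl)
    · -- ν i k ; blocks of j and l meet the prefix
      by_cases hbi : (minBlk ν.1 i : ℕ) ≤ a
      · exact Or.inr ⟨hbi, hbj⟩
      · exfalso
        set e := minBlk ν.1 j with he
        have hej : ν.1 e j := minBlk_rel ν.1 j
        have helt : e < i := by
          have : ¬ ((i : ℕ) ≤ a) := fun h => hbi (le_trans (minBlk_le_self ν.1 i) h)
          exact Fin.lt_def.mpr (by omega)
        have := ν.2 e i j k helt hij hjk hej hik
        exact hbi (le_trans (Fin.le_def.mp (minBlk_le ν.1 this)) hbj)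
  · rcases hjl with hjl | ⟨hbj, hbl⟩
    · by_cases hbj : (minBlk ν.1 j : ℕ) ≤ a
      · exact Or.inr ⟨hbi, hbj⟩
      · exfalso
        set e := minBlk ν.1 k with he
        have hek : ν.1 e k := minBlk_rel ν.1 k
        have helt : e < j := by
          have : ¬ ((j : ℕ) ≤ a) := fun h => hbj (le_trans (minBlk_le_self ν.1 j) h)
          have hea : (e : ℕ) ≤ a := hbk
          exact Fin.lt_def.mpr (by omega)
        have := ν.2 e j k l helt hjk hkl hek hjl
        exact hbj (le_trans (Fin.le_def.mp (minBlk_le ν.1 this)) hbk)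
    · exact Or.inr ⟨hbi, hbj⟩

def pjoinNCP (a : ℕ) (ν : NCP (n + 1)) : NCP (n + 1) :=
  ⟨pjoinRel a ν, pjoin_noncrossing a ν⟩

lemma pjoin_rel {a : ℕ} {ν : NCP (n + 1)} (x y : Fin (n + 1)) :
    (pjoinNCP a ν).1 x y ↔
      ν.1 x y ∨ ((minBlk ν.1 x : ℕ) ≤ a ∧ (minBlk ν.1 y : ℕ) ≤ a) := Iff.rfl

lemma le_pjoin (a : ℕ) (ν : NCP (n + 1)) : ν ≤ pjoinNCP a ν :=
  ncp_le_iff.mpr fun x y h => Or.inl h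

lemma pjoin_mono {a b : ℕ} (hab : a ≤ b) (ν : NCP (n + 1)) :
    pjoinNCP a ν ≤ pjoinNCP b ν := by
  rw [ncp_le_iff]
  rintro x y (h | ⟨h1, h2⟩)
  · exact Or.inl h
  · exact Or.inr ⟨le_trans h1 hab, le_trans h2 hab⟩

lemma pjoin_zero (ν : NCP (n + 1)) : pjoinNCP 0 ν = ν := by
  apply ncp_ext
  intro x y
  rw [pjoin_rel]
  constructor
  · rintro (h | ⟨h1, h2⟩)
    · exact h
    · have hx : minBlk ν.1 x = minBlk ν.1 y := Fin.ext (by omega)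
      exact ν.1.trans' (ν.1.symm' (minBlk_rel ν.1 x)) (hx ▸ minBlk_rel ν.1 y)
  · exact fun h => Or.inl h

lemma pjoin_bot (a : ℕ) : pjoinNCP a (⊥ : NCP (n + 1)) = prefNCP (n + 1) a := by
  apply ncp_ext
  intro x y
  rw [pjoin_rel, prefNCP_rel]
  have hx : minBlk (⊥ : NCP (n + 1)).1 x = x := isBMin_bot x
  have hy : minBlk (⊥ : NCP (n + 1)).1 y = y := isBMin_bot y
  rw [hx, hy, ncp_bot_iff]

lemma pref_le_pjoin (a : ℕ) (ν : NCP (n + 1)) : prefNCP (n + 1) a ≤ pjoinNCP a ν := by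
  rw [ncp_le_iff]
  intro x y h
  rcases h with rfl | ⟨h1, h2⟩
  · exact Or.inl (ν.1.refl' x)
  · exact Or.inr ⟨le_trans (Fin.le_def.mp (minBlk_le_self ν.1 x)) h1,
      le_trans (Fin.le_def.mp (minBlk_le_self ν.1 y)) h2⟩

end NCAux8
section NCAux9
variable {n : ℕ}

open scoped Classical

/-- The meet `⨅_{ν ∈ S} (M_{F ν} ⊔ ν)`. -/
noncomputable def infJoin (S : Set (NCP (n + 1))) (F : NCP (n + 1) → ℕ) : NCP (n + 1) :=
  sInf {p | ∃ ν ∈ S, p = pjoinNCP (F ν) ν}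

lemma infJoin_rel {S : Set (NCP (n + 1))} {F : NCP (n + 1) → ℕ} (x y : Fin (n + 1)) :
    (infJoin S F).1 x y ↔ x = y ∨ ∀ ν ∈ S, (pjoinNCP (F ν) ν).1 x y := by
  constructor
  · rintro (rfl | h)
    · exact Or.inl rfl
    · exact Or.inr fun ν hν => h _ ⟨ν, hν, rfl⟩
  · rintro (rfl | h)
    · exact Or.inl rfl
    · exact Or.inr fun p hp => by
        obtain ⟨ν, hν, rfl⟩ := hp
        exact h ν hν

lemma infJoin_le {S : Set (NCP (n + 1))} {F : NCP (n + 1) → ℕ} {ν : NCP (n + 1)}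
    (hν : ν ∈ S) : infJoin S F ≤ pjoinNCP (F ν) ν :=
  sInf_le ⟨ν, hν, rfl⟩

lemma le_infJoin {S : Set (NCP (n + 1))} {F : NCP (n + 1) → ℕ} {t : NCP (n + 1)}
    (h : ∀ ν ∈ S, t ≤ pjoinNCP (F ν) ν) : t ≤ infJoin S F :=
  le_sInf (by rintro p ⟨ν, hν, rfl⟩; exact h ν hν)

lemma infJoin_mono {S : Set (NCP (n + 1))} {F G : NCP (n + 1) → ℕ}
    (h : ∀ ν ∈ S, F ν ≤ G ν) : infJoin S F ≤ infJoin S G :=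
  le_infJoin fun ν hν => le_trans (infJoin_le hν) (pjoin_mono (h ν hν) ν)

/-- `F` is antitone on `S`. -/
def AntiOn (S : Set (NCP (n + 1))) (F : NCP (n + 1) → ℕ) : Prop :=
  ∀ ν ∈ S, ∀ ν' ∈ S, ν ≤ ν' → F ν' ≤ F ν

lemma infJoin_inf (S : Set (NCP (n + 1))) (F G : NCP (n + 1) → ℕ) :
    infJoin S F ⊓ infJoin S G = infJoin S (fun ν => min (F ν) (G ν)) := by
  apply le_antisymm
  · apply le_infJoin
    intro ν hν
    rcases le_total (F ν) (G ν) with h | h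
    · rw [min_eq_left h]
      exact le_trans inf_le_left (infJoin_le hν)
    · rw [min_eq_right h]
      exact le_trans inf_le_right (infJoin_le hν)
  · exact le_inf (infJoin_mono fun ν _ => min_le_left _ _)
      (infJoin_mono fun ν _ => min_le_right _ _)

/-- The key join lemma: for antitone `F`, `G` on a chain `S`,
any common upper bound of `infJoin S F` and `infJoin S G` is above
`infJoin S (max F G)`. -/
lemma join_key {S : Set (NCP (n + 1))} (hS : IsChain (· ≤ ·) S)
    {F G : NCP (n + 1) → ℕ} (hF : AntiOn S F) (hG : AntiOn S G)
    (t : NCP (n + 1)) (htF : infJoin S F ≤ t) (htG : infJoin S G ≤ t) :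
    infJoin S (fun ν => max (F ν) (G ν)) ≤ t := by
  have main : ∀ N : ℕ, ∀ x y : Fin (n + 1),
      ({ν | ν ∈ S ∧ ¬ ν.1 x y}.ncard * (2 * (n + 1)) + (x : ℕ) + (y : ℕ)) ≤ N →
      (∀ ν ∈ S, (pjoinNCP (max (F ν) (G ν)) ν).1 x y) → t.1 x y := by
    intro N
    induction N using Nat.strong_induction_on with
    | _ N IH =>
      intro x y hm hM
      set I := {ν | ν ∈ S ∧ ¬ ν.1 x y} with hI
      rcases Set.eq_empty_or_nonempty I with hIe | hIne
      · -- every element of S relates x and y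
        have : (infJoin S F).1 x y := by
          rw [infJoin_rel]
          refine Or.inr fun ν hν => Or.inl ?_
          by_contra hne
          have hmem : ν ∈ I := ⟨hν, hne⟩
          rw [hIe] at hmem
          exact hmem
        exact ncp_le_iff.mp htF _ _ this
      · -- take the maximal non-relating level ρ
        obtain ⟨ρ, hρI, hρmax⟩ := Set.Finite.exists_maximalFor id I (Set.toFinite I) hIne
        obtain ⟨hρS, hρxy⟩ := id hρI
        have hxy : x ≠ y := fun h => hρxy (h ▸ ρ.1.refl' x)
        have hle_ρ : ∀ ν ∈ I, ν ≤ ρ := by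
          intro ν hν
          rcases eq_or_ne ν ρ with rfl | hne
          · exact le_rfl
          rcases hS hν.1 hρS hne with h | h
          · exact h
          · exact hρmax hν h
        -- relating levels are above ρ
        have hrel_ρ : ∀ ν ∈ S, ν.1 x y → ρ ≤ ν := by
          intro ν hν hxyν
          rcases eq_or_ne ν ρ with rfl | hne
          · exact le_rfl
          rcases hS hν hρS hne with h | h
          · exact absurd (ncp_le_iff.mp h _ _ hxyν) hρxy
          · exact h
        obtain ⟨hbx, hby⟩ : (minBlk ρ.1 x : ℕ) ≤ max (F ρ) (G ρ) ∧
            (minBlk ρ.1 y : ℕ) ≤ max (F ρ) (G ρ) := by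
          rcases hM ρ hρS with h | h
          · exact absurd h hρxy
          · exact h
        by_cases hv : minBlk ρ.1 y < y
        · -- recurse through v = minBlk ρ y
          set v := minBlk ρ.1 y with hvdef
          have hρvy : ρ.1 v y := minBlk_rel ρ.1 y
          have hxv : x ≠ v := fun h => hρxy (h ▸ hρvy)
          -- condition for the pair (x, v)
          have hMxv : ∀ ν ∈ S, (pjoinNCP (max (F ν) (G ν)) ν).1 x v := by
            intro ν hν
            by_cases hνxy : ν.1 x y
            · exact Or.inl (ν.1.trans' hνxy (ν.1.symm'
                (ncp_le_iff.mp (hrel_ρ ν hν hνxy) _ _ hρvy)))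
            · have hνI : ν ∈ I := ⟨hν, hνxy⟩
              rcases hM ν hν with h | ⟨h1, h2⟩
              · exact absurd h hνxy
              · refine Or.inr ⟨h1, ?_⟩
                have hvley : (minBlk ν.1 v : ℕ) ≤ (minBlk ν.1 y : ℕ) := by
                  have h3 : v ≤ minBlk ν.1 y := minBlk_mono (hle_ρ ν hνI) y
                  exact le_trans (Fin.le_def.mp (le_trans (minBlk_le_self ν.1 v) h3))
                    le_rfl
                exact le_trans hvley h2
          -- condition for the pair (v, y)
          have hMvy : ∀ ν ∈ S, (pjoinNCP (max (F ν) (G ν)) ν).1 v y := by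
            intro ν hν
            by_cases hνxy : ν.1 x y
            · exact Or.inl (ncp_le_iff.mp (hrel_ρ ν hν hνxy) _ _ hρvy)
            · have hνI : ν ∈ I := ⟨hν, hνxy⟩
              rcases hM ν hν with h | ⟨h1, h2⟩
              · exact absurd h hνxy
              · refine Or.inr ⟨?_, h2⟩
                have h3 : v ≤ minBlk ν.1 y := minBlk_mono (hle_ρ ν hνI) y
                exact le_trans (Fin.le_def.mp (le_trans (minBlk_le_self ν.1 v) h3)) h2
          -- measures
          have hsub1 : {ν | ν ∈ S ∧ ¬ ν.1 x v} ⊆ I := by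
            rintro ν ⟨hν, hνxv⟩
            refine ⟨hν, fun hνxy => hνxv ?_⟩
            exact ν.1.trans' hνxy (ν.1.symm' (ncp_le_iff.mp (hrel_ρ ν hν hνxy) _ _ hρvy))
          have hsub2 : {ν | ν ∈ S ∧ ¬ ν.1 v y} ⊂ I := by
            constructor
            · rintro ν ⟨hν, hνvy⟩
              refine ⟨hν, fun hνxy => hνvy ?_⟩
              exact ncp_le_iff.mp (hrel_ρ ν hν hνxy) _ _ hρvy
            · intro hcon
              exact (hcon ⟨hρS, hρxy⟩).2 hρvy
          have hc1 : {ν | ν ∈ S ∧ ¬ ν.1 x v}.ncard ≤ I.ncard :=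
            Set.ncard_le_ncard hsub1 (Set.toFinite I)
          have hc2 : {ν | ν ∈ S ∧ ¬ ν.1 v y}.ncard < I.ncard :=
            Set.ncard_lt_ncard hsub2 (Set.toFinite I)
          have hvy : (v : ℕ) < (y : ℕ) := Fin.lt_def.mp hv
          -- combine with transitivity of t
          have t1 : t.1 x v := by
            refine IH ({ν | ν ∈ S ∧ ¬ ν.1 x v}.ncard * (2 * (n + 1)) + (x : ℕ) + (v : ℕ))
              ?_ x v le_rfl hMxv
            have := Nat.mul_le_mul_right (2 * (n + 1)) hc1
            omega
          have t2 : t.1 v y := by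
            refine IH ({ν | ν ∈ S ∧ ¬ ν.1 v y}.ncard * (2 * (n + 1)) + (v : ℕ) + (y : ℕ))
              ?_ v y le_rfl hMvy
            have h5 := Nat.mul_le_mul_right (2 * (n + 1)) (Nat.succ_le_of_lt hc2)
            rw [Nat.succ_mul] at h5
            have h6 : (v : ℕ) < n + 1 := v.2
            have h7 : (y : ℕ) < n + 1 := y.2
            omega
          exact t.1.trans' t1 t2
        by_cases hu : minBlk ρ.1 x < x
        · -- symmetric: recurse through u = minBlk ρ x
          set u := minBlk ρ.1 x with hudef
          have hρux : ρ.1 u x := minBlk_rel ρ.1 x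
          have hMuy : ∀ ν ∈ S, (pjoinNCP (max (F ν) (G ν)) ν).1 u y := by
            intro ν hν
            by_cases hνxy : ν.1 x y
            · exact Or.inl (ν.1.trans' (ncp_le_iff.mp (hrel_ρ ν hν hνxy) _ _ hρux) hνxy)
            · have hνI : ν ∈ I := ⟨hν, hνxy⟩
              rcases hM ν hν with h | ⟨h1, h2⟩
              · exact absurd h hνxy
              · refine Or.inr ⟨?_, h2⟩
                have h3 : u ≤ minBlk ν.1 x := minBlk_mono (hle_ρ ν hνI) x
                exact le_trans (Fin.le_def.mp (le_trans (minBlk_le_self ν.1 u) h3)) h1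
          have hMxu : ∀ ν ∈ S, (pjoinNCP (max (F ν) (G ν)) ν).1 x u := by
            intro ν hν
            by_cases hνxy : ν.1 x y
            · exact Or.inl (ν.1.symm' (ncp_le_iff.mp (hrel_ρ ν hν hνxy) _ _ hρux))
            · have hνI : ν ∈ I := ⟨hν, hνxy⟩
              rcases hM ν hν with h | ⟨h1, h2⟩
              · exact absurd h hνxy
              · refine Or.inr ⟨h1, ?_⟩
                have h3 : u ≤ minBlk ν.1 x := minBlk_mono (hle_ρ ν hνI) x
                exact le_trans (Fin.le_def.mp (le_trans (minBlk_le_self ν.1 u) h3)) h1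
          have hsub1 : {ν | ν ∈ S ∧ ¬ ν.1 u y} ⊆ I := by
            rintro ν ⟨hν, hνuy⟩
            refine ⟨hν, fun hνxy => hνuy ?_⟩
            exact ν.1.trans' (ncp_le_iff.mp (hrel_ρ ν hν hνxy) _ _ hρux) hνxy
          have hsub2 : {ν | ν ∈ S ∧ ¬ ν.1 x u} ⊂ I := by
            constructor
            · rintro ν ⟨hν, hνxu⟩
              refine ⟨hν, fun hνxy => hνxu ?_⟩
              exact ν.1.symm' (ncp_le_iff.mp (hrel_ρ ν hν hνxy) _ _ hρux)
            · intro hcon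
              exact (hcon ⟨hρS, hρxy⟩).2 (ρ.1.symm' hρux)
          have hc1 : {ν | ν ∈ S ∧ ¬ ν.1 u y}.ncard ≤ I.ncard :=
            Set.ncard_le_ncard hsub1 (Set.toFinite I)
          have hc2 : {ν | ν ∈ S ∧ ¬ ν.1 x u}.ncard < I.ncard :=
            Set.ncard_lt_ncard hsub2 (Set.toFinite I)
          have hux : (u : ℕ) < (x : ℕ) := Fin.lt_def.mp hu
          have t1 : t.1 u y := by
            refine IH ({ν | ν ∈ S ∧ ¬ ν.1 u y}.ncard * (2 * (n + 1)) + (u : ℕ) + (y : ℕ))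
              ?_ u y le_rfl hMuy
            have := Nat.mul_le_mul_right (2 * (n + 1)) hc1
            omega
          have t2 : t.1 x u := by
            refine IH ({ν | ν ∈ S ∧ ¬ ν.1 x u}.ncard * (2 * (n + 1)) + (x : ℕ) + (u : ℕ))
              ?_ x u le_rfl hMxu
            have h5 := Nat.mul_le_mul_right (2 * (n + 1)) (Nat.succ_le_of_lt hc2)
            rw [Nat.succ_mul] at h5
            have h6 : (u : ℕ) < n + 1 := u.2
            have h7 : (x : ℕ) < n + 1 := x.2
            omega
          exact t.1.trans' t2 t1
        · -- base case: x and y are self-minima at every level in I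
          push_neg at hv hu
          have hvx : minBlk ρ.1 x = x := le_antisymm (minBlk_le_self ρ.1 x) hu
          have hvy : minBlk ρ.1 y = y := le_antisymm (minBlk_le_self ρ.1 y) hv
          have hself : ∀ ν ∈ I, minBlk ν.1 x = x ∧ minBlk ν.1 y = y := by
            intro ν hν
            constructor
            · refine le_antisymm (minBlk_le_self ν.1 x) ?_
              calc x = minBlk ρ.1 x := hvx.symm
              _ ≤ minBlk ν.1 x := minBlk_mono (hle_ρ ν hν) x
            · refine le_antisymm (minBlk_le_self ν.1 y) ?_
              calc y = minBlk ρ.1 y := hvy.symm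
              _ ≤ minBlk ν.1 y := minBlk_mono (hle_ρ ν hν) y
          have hd : ∀ ν ∈ I, ((x : ℕ) ≤ F ν ∧ (y : ℕ) ≤ F ν) ∨
              ((x : ℕ) ≤ G ν ∧ (y : ℕ) ≤ G ν) := by
            intro ν hν
            rcases hM ν hν.1 with h | ⟨h1, h2⟩
            · exact absurd h hν.2
            · rw [(hself ν hν).1] at h1
              rw [(hself ν hν).2] at h2
              rcases max_choice (F ν) (G ν) with h | h
              · rw [h] at h1 h2
                exact Or.inl ⟨h1, h2⟩
              · rw [h] at h1 h2
                exact Or.inr ⟨h1, h2⟩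
          by_cases hP : ∀ ν ∈ I, (x : ℕ) ≤ F ν ∧ (y : ℕ) ≤ F ν
          · -- F works everywhere
            have : (infJoin S F).1 x y := by
              rw [infJoin_rel]
              refine Or.inr fun ν hν => ?_
              by_cases hνxy : ν.1 x y
              · exact Or.inl hνxy
              · have hνI : ν ∈ I := ⟨hν, hνxy⟩
                obtain ⟨h1, h2⟩ := hP ν hνI
                refine Or.inr ⟨?_, ?_⟩
                · rw [(hself ν hνI).1]; exact h1
                · rw [(hself ν hνI).2]; exact h2
            exact ncp_le_iff.mp htF _ _ this
          · -- G works everywhere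
            obtain ⟨ν1, hν1I, hν1bad⟩ : ∃ ν1 ∈ I, ¬ ((x : ℕ) ≤ F ν1 ∧ (y : ℕ) ≤ F ν1) := by
              by_contra hc
              push_neg at hc
              exact hP fun ν hν => ⟨hc ν hν |>.1, hc ν hν |>.2⟩
            have hGall : ∀ ν ∈ I, (x : ℕ) ≤ G ν ∧ (y : ℕ) ≤ G ν := by
              intro ν hν
              rcases eq_or_ne ν ν1 with rfl | hne
              · exact (hd ν hν).resolve_left hν1bad
              rcases hS hν.1 hν1I.1 hne with h | h
              · -- ν ≤ ν1 : G ν ≥ G ν1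
                obtain ⟨g1, g2⟩ := (hd ν1 hν1I).resolve_left hν1bad
                have := hG ν hν.1 ν1 hν1I.1 h
                exact ⟨le_trans g1 this, le_trans g2 this⟩
              · -- ν1 ≤ ν : F ν ≤ F ν1, so F fails at ν too
                refine (hd ν hν).resolve_left ?_
                intro ⟨f1, f2⟩
                have := hF ν1 hν1I.1 ν hν.1 h
                exact hν1bad ⟨le_trans f1 this, le_trans f2 this⟩
            have : (infJoin S G).1 x y := by
              rw [infJoin_rel]
              refine Or.inr fun ν hν => ?_
              by_cases hνxy : ν.1 x y
              · exact Or.inl hνxy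
              · have hνI : ν ∈ I := ⟨hν, hνxy⟩
                obtain ⟨h1, h2⟩ := hGall ν hνI
                refine Or.inr ⟨?_, ?_⟩
                · rw [(hself ν hνI).1]; exact h1
                · rw [(hself ν hνI).2]; exact h2
            exact ncp_le_iff.mp htG _ _ this
  rw [ncp_le_iff]
  intro x y hxy
  rw [infJoin_rel] at hxy
  rcases hxy with rfl | h
  · exact t.1.refl' x
  · exact main _ x y le_rfl h

lemma infJoin_sup {S : Set (NCP (n + 1))} (hS : IsChain (· ≤ ·) S)
    {F G : NCP (n + 1) → ℕ} (hF : AntiOn S F) (hG : AntiOn S G) :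
    infJoin S F ⊔ infJoin S G = infJoin S (fun ν => max (F ν) (G ν)) := by
  apply le_antisymm
  · exact sup_le (infJoin_mono fun ν _ => le_max_left _ _)
      (infJoin_mono fun ν _ => le_max_right _ _)
  · exact join_key hS hF hG _ le_sup_left le_sup_right

end NCAux9
section NCAux10
variable {n : ℕ}

open scoped Classical

def Mchain (n : ℕ) : ℕ → NCP (n + 1) := fun k => prefNCP (n + 1) k

lemma pref_mono {a b : ℕ} (hab : a ≤ b) : prefNCP (n + 1) a ≤ prefNCP (n + 1) b := by
  rw [ncp_le_iff]
  rintro x y (rfl | ⟨h1, h2⟩)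
  · exact Or.inl rfl
  · exact Or.inr ⟨le_trans h1 hab, le_trans h2 hab⟩

lemma pref_covby {j : ℕ} (hj : j < n) :
    prefNCP (n + 1) j ⋖ prefNCP (n + 1) (j + 1) := by
  have hjf : j + 1 < n + 1 := by omega
  constructor
  · apply lt_of_le_of_ne (pref_mono (Nat.le_succ j))
    intro h
    have : (prefNCP (n + 1) j).1 ⟨0, by omega⟩ ⟨j + 1, hjf⟩ := by
      rw [h]
      exact Or.inr ⟨by simp, le_rfl⟩
    rcases this with h' | ⟨h1, h2⟩
    · exact absurd (congrArg Fin.val h') (by simp)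
    · simp at h2
  · intro z hz1 hz2
    obtain ⟨x0, y0, hz, hnp⟩ := exists_pair_of_lt hz1
    have hxyne : x0 ≠ y0 := fun h => hnp (h ▸ Or.inl rfl)
    have hble : (x0 : ℕ) ≤ j + 1 ∧ (y0 : ℕ) ≤ j + 1 := by
      have := ncp_le_iff.mp hz2.le _ _ hz
      rcases this with h' | h'
      · exact absurd h' hxyne
      · exact h'
    have hnotb : ¬ ((x0 : ℕ) ≤ j ∧ (y0 : ℕ) ≤ j) := fun h => hnp (Or.inr h)
    obtain ⟨p, q, hzpq, hpj, hqj⟩ : ∃ p q : Fin (n + 1), z.1 p q ∧ (p : ℕ) ≤ j ∧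
        (q : ℕ) = j + 1 := by
      by_cases hx : (x0 : ℕ) ≤ j
      · exact ⟨x0, y0, hz, hx, by omega⟩
      · have hx1 : (x0 : ℕ) = j + 1 := by omega
        have hy : (y0 : ℕ) ≤ j := by
          by_contra hy
          exact hxyne (Fin.ext (by omega))
        exact ⟨y0, x0, z.1.symm' hz, hy, hx1⟩
    have hgoal : prefNCP (n + 1) (j + 1) ≤ z := by
      rw [ncp_le_iff]
      rintro u v (rfl | ⟨hu, hv⟩)
      · exact z.1.refl' u
      have key : ∀ w : Fin (n + 1), (w : ℕ) ≤ j + 1 → z.1 w q := by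
        intro w hw
        by_cases hwj : (w : ℕ) ≤ j
        · exact z.1.trans' (ncp_le_iff.mp hz1.le _ _ (Or.inr ⟨hwj, hpj⟩)) hzpq
        · have hwq : w = q := Fin.ext (by omega)
          rw [hwq]
      exact z.1.trans' (key u hu) (z.1.symm' (key v hv))
    exact absurd (lt_of_lt_of_le hz2 hgoal) (lt_irrefl _)

lemma Mchain_sat : IsSatChain n (Mchain n) (⊥ : NCP (n + 1)) ⊤ := by
  refine ⟨prefNCP_zero, fun j hj => prefNCP_top hj, fun j hj => pref_covby hj⟩

lemma infJoin_const {S : Set (NCP (n + 1))} (hbot : (⊥ : NCP (n + 1)) ∈ S) (k : ℕ) :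
    infJoin S (fun _ => k) = prefNCP (n + 1) k := by
  apply le_antisymm
  · have := infJoin_le (F := fun _ => k) hbot
    rw [pjoin_bot] at this
    exact this
  · exact le_infJoin fun ν _ => pref_le_pjoin k ν

lemma infJoin_elem {S : Set (NCP (n + 1))} {ν0 : NCP (n + 1)} (hν0 : ν0 ∈ S) :
    infJoin S (fun ν => if ν0 ≤ ν then 0 else n) = ν0 := by
  apply le_antisymm
  · have h := infJoin_le (F := fun ν => if ν0 ≤ ν then 0 else n) hν0
    have hb : pjoinNCP (if ν0 ≤ ν0 then 0 else n) ν0 = ν0 := by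
      rw [if_pos le_rfl, pjoin_zero]
    exact le_trans h (le_of_eq hb)
  · apply le_infJoin
    intro ν hν
    show ν0 ≤ pjoinNCP (if ν0 ≤ ν then 0 else n) ν
    by_cases hle : ν0 ≤ ν
    · rw [if_pos hle, pjoin_zero]
      exact hle
    · rw [if_neg hle]
      rw [ncp_le_iff]
      intro x y h
      exact Or.inr ⟨Nat.lt_succ_iff.mp (Fin.is_lt _), Nat.lt_succ_iff.mp (Fin.is_lt _)⟩

lemma NC_supersolvable (n : ℕ) : Supersolvable n (NCP (n + 1)) := by
  refine ⟨⟨Mchain n, Mchain_sat⟩, ?_⟩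
  intro c hc
  set S := insert (⊥ : NCP (n + 1)) c with hSdef
  have hSchain : IsChain (· ≤ ·) S := hc.insert (fun b _ _ => Or.inl bot_le)
  set D := {p : NCP (n + 1) | ∃ F, AntiOn S F ∧ p = infJoin S F} with hDdef
  have hclosed : SublClosed D := by
    rintro a ⟨F, hF, rfl⟩ b ⟨G, hG, rfl⟩
    constructor
    · refine ⟨fun ν => max (F ν) (G ν), ?_, infJoin_sup hSchain hF hG⟩
      intro ν hν ν' hν' hle
      exact max_le_max (hF ν hν ν' hν' hle) (hG ν hν ν' hν' hle)
    · refine ⟨fun ν => min (F ν) (G ν), ?_, infJoin_inf S F G⟩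
      intro ν hν ν' hν' hle
      exact min_le_min (hF ν hν ν' hν' hle) (hG ν hν ν' hν' hle)
  have hsub : Set.range (Mchain n) ∪ c ⊆ D := by
    rintro p (⟨k, rfl⟩ | hp)
    · exact ⟨fun _ => k, fun ν _ ν' _ _ => le_rfl,
        (infJoin_const (Set.mem_insert _ _) k).symm⟩
    · refine ⟨fun ν => if p ≤ ν then 0 else n, ?_,
        (infJoin_elem (Set.mem_insert_of_mem _ hp)).symm⟩
      intro ν hν ν' hν' hle
      show (if p ≤ ν' then 0 else n) ≤ (if p ≤ ν then 0 else n)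
      by_cases h0 : p ≤ ν
      · rw [if_pos h0, if_pos (le_trans h0 hle)]
      · rw [if_neg h0]
        by_cases h1 : p ≤ ν'
        · rw [if_pos h1]
          exact Nat.zero_le n
        · rw [if_neg h1]
  have hgen : genSub (Set.range (Mchain n) ∪ c) ⊆ D :=
    Set.sInter_subset_of_mem ⟨hsub, hclosed⟩
  intro a ha b hb e he
  obtain ⟨F, hF, rfl⟩ := hgen ha
  obtain ⟨G, hG, rfl⟩ := hgen hb
  obtain ⟨H, hH, rfl⟩ := hgen he
  have hGH : AntiOn S fun ν => max (G ν) (H ν) := fun ν hν ν' hν' hle =>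
    max_le_max (hG ν hν ν' hν' hle) (hH ν hν ν' hν' hle)
  have hFG : AntiOn S fun ν => min (F ν) (G ν) := fun ν hν ν' hν' hle =>
    min_le_min (hF ν hν ν' hν' hle) (hG ν hν ν' hν' hle)
  have hFH : AntiOn S fun ν => min (F ν) (H ν) := fun ν hν ν' hν' hle =>
    min_le_min (hF ν hν ν' hν' hle) (hH ν hν ν' hν' hle)
  rw [infJoin_sup hSchain hG hH, infJoin_inf, infJoin_inf, infJoin_inf,
    infJoin_sup hSchain hFG hFH]
  congr 1
  funext ν
  exact inf_sup_left _ _ _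
end NCAux10
section NCAux11
variable {n : ℕ}

open scoped Classical

lemma mem_Lset_bot_top (v : Fin (n + 1)) :
    v ∈ Lset (⊥ : NCP (n + 1)) ⊤ ↔ v ≠ 0 := by
  have htop : ∀ w : Fin (n + 1), minBlk (⊤ : NCP (n + 1)).1 w = 0 := by
    intro w
    apply le_antisymm
    · exact minBlk_le _ ((ncp_top_iff 0 w).mpr trivial)
    · exact Fin.zero_le _
  constructor
  · rintro ⟨-, h2⟩ rfl
    exact h2 (htop 0)
  · intro hv
    refine ⟨isBMin_bot v, fun h => hv ?_⟩
    rw [IsBMin, htop v] at h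
    exact h.symm

end NCAux11

/-- The labeling of the noncrossing partition lattice `NC_{n+1}`
given on covers `μ ⋖ ν` (where `ν` merges blocks `B, B'` of `μ`) by
`λ(μ,ν) = max(min B, min B') - 1` is an `S_n` EL-labeling; consequently `NC_{n+1}`
is supersolvable. (Here `Fin (n+1)` is the 0-indexed ground set, so the formula
reads `max(min B, min B')` in 0-indexed values, giving labels in `{1, …, n}`.) -/
theorem NC_snellable_and_supersolvable (n : ℕ)
    (lab : NCP (n + 1) → NCP (n + 1) → ℤ)
    (hlab : ∀ μ ν : NCP (n + 1), μ ⋖ ν → ∀ a b : Fin (n + 1),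
      ν.1 a b → ¬ μ.1 a b →
      lab μ ν = ((max (minBlk μ.1 a) (minBlk μ.1 b) : Fin (n + 1)) : ℕ)) :
    IsSnELLabeling n lab ∧ Supersolvable n (NCP (n + 1)) := by
  classical
  -- the label of a cover is the lost block-minimum
  have lab_eq : ∀ μ ν : NCP (n + 1), μ ⋖ ν →
      lab μ ν = ((labval μ ν : Fin (n + 1)) : ℕ) := by
    intro μ ν h
    obtain ⟨c0, y1, hd, he⟩ := cover_eq_merge h
    have hlv : labval μ ν = y1 := by
      have h1 := labval_spec h
      have h2 : Lset μ ν = {y1} := by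
        conv_lhs => rw [he]
        exact merge_Lset h.1.le hd
      rw [h2] at h1
      exact (Set.singleton_eq_singleton_iff.mp h1).symm
    have hab : ν.1 c0 y1 := by
      rw [he]
      exact Or.inr (Or.inl ⟨μ.1.refl' c0, μ.1.refl' y1⟩)
    have hnab : ¬ μ.1 c0 y1 := fun hx => hd.2.2.1 (μ.1.symm' hx)
    have := hlab μ ν h c0 y1 hab hnab
    rw [this, hlv]
    congr 1
    have hb0 : minBlk μ.1 c0 = c0 := hd.c0_bmin h.1.le
    have hb1 : minBlk μ.1 y1 = y1 := hd.y1_bmin h.1.le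
    rw [hb0, hb1]
    exact max_eq_right hd.lt.le
  -- IncreasingChain ↔ LabMono for saturated chains
  have inc_iff : ∀ (k : ℕ) (c : ℕ → NCP (n + 1)) (x y : NCP (n + 1)),
      IsSatChain k c x y → (IncreasingChain lab k c ↔ LabMono k c) := by
    intro k c x y hsat
    constructor
    · intro hinc j hj
      have h1 := hinc j hj
      rw [lab_eq _ _ (hsat.2.2 j (by omega)), lab_eq _ _ (hsat.2.2 (j+1) hj)] at h1
      exact Fin.le_def.mpr (by exact_mod_cast h1)
    · intro hm j hj
      rw [lab_eq _ _ (hsat.2.2 j (by omega)), lab_eq _ _ (hsat.2.2 (j+1) hj)]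
      exact_mod_cast Fin.le_def.mp (hm j hj)
  refine ⟨⟨?_, ?_⟩, NC_supersolvable n⟩
  · -- EL labeling
    intro x y hxy k hex
    obtain ⟨c0, hc0⟩ := hex
    have hk : (Lset x y).ncard = k := chain_card hc0
    have hgsat : IsSatChain k (gchain x y) x y := hk ▸ gchain_sat hxy.le
    have hgmono : LabMono k (gchain x y) := by
      intro j hj
      exact gchain_incr hxy.le (by omega)
    constructor
    · refine ⟨gchain x y, ⟨hgsat, (inc_iff k _ x y hgsat).mpr hgmono⟩, ?_⟩
      rintro c' ⟨hsat', hinc'⟩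
      exact incr_unique k c' (gchain x y) x y hsat'
        ((inc_iff k c' x y hsat').mp hinc') hgsat hgmono
    · intro c d hc hcinc hd hne
      obtain ⟨i, hik, hbef, hlt⟩ := lex_lemma hc ((inc_iff k c x y hc).mp hcinc) hd hne
      refine ⟨i, hik, ?_, ?_⟩
      · intro j hj
        rw [lab_eq _ _ (hc.2.2 j (by omega)), lab_eq _ _ (hd.2.2 j (by omega)),
          hbef j hj]
      · rw [lab_eq _ _ (hc.2.2 i hik), lab_eq _ _ (hd.2.2 i hik)]
        exact_mod_cast Fin.lt_def.mp hlt
  · -- S_n word property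
    intro c hc
    have hval : ∀ j : Fin n, 1 ≤ (labval (c j) (c ((j : ℕ) + 1))).val := by
      intro j
      have hv : labval (c j) (c ((j : ℕ) + 1)) ∈ Lset (⊥ : NCP (n + 1)) ⊤ :=
        (chain_mem_Lset hc _).mpr ⟨j, j.2, rfl⟩
      have := (mem_Lset_bot_top _).mp hv
      have hne : (labval (c j) (c ((j : ℕ) + 1))).val ≠ 0 :=
        fun h => this (Fin.ext h)
      omega
    have hvlt : ∀ j : Fin n, (labval (c j) (c ((j : ℕ) + 1))).val - 1 < n := by
      intro j
      have h1 := (labval (c j) (c ((j : ℕ) + 1))).2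
      have h2 := hval j
      omega
    set f : Fin n → Fin n := fun j => ⟨(labval (c j) (c ((j : ℕ) + 1))).val - 1, hvlt j⟩
      with hf
    have hinj : Function.Injective f := by
      intro j1 j2 heq
      have h1 := hval j1
      have h2 := hval j2
      have hveq : (labval (c j1) (c ((j1 : ℕ) + 1))).val
          = (labval (c j2) (c ((j2 : ℕ) + 1))).val := by
        have := congrArg Fin.val heq
        simp only [hf] at this
        omega
      by_contra hne
      have hne' : (j1 : ℕ) ≠ (j2 : ℕ) := fun h => hne (Fin.ext h)
      rcases Nat.lt_or_ge (j1 : ℕ) (j2 : ℕ) with h | h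
      · exact chain_labels_distinct hc h j2.2 (Fin.ext hveq)
      · exact chain_labels_distinct hc (by omega) j1.2 (Fin.ext hveq.symm)
    refine ⟨Equiv.ofBijective f (Finite.injective_iff_bijective.mp hinj), ?_⟩
    intro j
    rw [lab_eq _ _ (hc.2.2 j j.2)]
    show ((labval (c j) (c ((j : ℕ) + 1))).val : ℤ) = ((f j : ℕ) : ℤ) + 1
    have h1 := hval j
    simp only [hf]
    push_cast
    omega
end

section
/- Let P be a finite graded bowtie-free poset of rank n with 0̂ and 1̂ carrying a good H_n(0) action U_1,...,U_{n−1} on its maximal chains. If U_{i_1}···U_{i_r}(m) = m_0 and U_{j_1}···U_{j_s}(m) = m_0 are both restless expressions reaching the unique descent-free maximal chain m_0, then s_{i_1}s_{i_2}···s_{i_r} = s_{j_1}s_{j_2}···s_{j_s} in the symmetric group S_n. -/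
/-!
Two commuting operators `U_i, U_j` (`|i - j| ≥ 2`) that both move a chain `c` still move `U_j c`
and `U_i c`, by locality. For adjacent `i, j`, bowtie-freeness gives the same conclusion for every
letter of `U_i U_j U_i c`: otherwise the braid relation produces a maximal chain through
`(U_i c)_i` and `(U_j c)_j`, and those two elements together with `c_i` and `c_{i+1}` form a
bowtie. As for reduced words in `S_n`, this yields an exchange property: if `w` is restless from
`A` to `m₀` and `U_j` moves `A`, then some restless word `v` from `U_j A` to `m₀` has
`s(v) s_j = s(w)`. Peeling off the first operator applied in one of the two words then proves
the theorem by induction.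
-/

open Equiv

section AdjacentTranspositions

theorem adjSwap_commute {n i j : ℕ} (h : i + 2 ≤ j) : Commute (adjSwap n i) (adjSwap n j) := by
  unfold adjSwap
  split_ifs with hi hj
  · refine Perm.Disjoint.commute (Perm.disjoint_swap_swap ?_)
    simp only [List.nodup_cons, List.mem_cons, List.not_mem_nil, List.nodup_nil, Fin.ext_iff,
      or_false, not_or, not_false_eq_true, and_true]
    omega
  all_goals simp

theorem adjSwap_braid {n i : ℕ} (h : i + 2 < n) :
    adjSwap n i * adjSwap n (i + 1) * adjSwap n i =
      adjSwap n (i + 1) * adjSwap n i * adjSwap n (i + 1) := by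
  set x : Fin n := ⟨i, by omega⟩
  set y : Fin n := ⟨i + 1, by omega⟩
  set z : Fin n := ⟨i + 1 + 1, h⟩
  have hxy : x ≠ y := by simp [x, y, Fin.ext_iff]
  have hxz : x ≠ z := by simp only [ne_eq, Fin.ext_iff, x, z]; omega
  have hyz : y ≠ z := by simp [y, z, Fin.ext_iff]
  have hx : adjSwap n i = swap x y := dif_pos (by omega)
  have hy : adjSwap n (i + 1) = swap y z := dif_pos h
  rw [hx, hy, swap_mul_swap_mul_swap hxy hxz, swap_comm x y, swap_comm y z,
    swap_mul_swap_mul_swap hyz.symm hxz.symm, swap_comm]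

/-- `swapWord n [i₁, …, iᵣ] = s_{i₁} ⋯ s_{iᵣ}`: letters are 1-indexed like the operators `U_i`,
while `adjSwap` is 0-indexed. -/
def swapWord (n : ℕ) (l : List ℕ) : Perm (Fin n) :=
  (l.map fun i => adjSwap n (i - 1)).prod

theorem swapWord_append_singleton (n : ℕ) (l : List ℕ) (a : ℕ) :
    swapWord n (l ++ [a]) = swapWord n l * adjSwap n (a - 1) := by
  simp [swapWord]

theorem adjSwap_pred_commute {n a b : ℕ} (ha : 1 ≤ a) (hb : 1 ≤ b)
    (h : a + 2 ≤ b ∨ b + 2 ≤ a) :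
    Commute (adjSwap n (a - 1)) (adjSwap n (b - 1)) := by
  rcases h with h | h
  · exact adjSwap_commute (by omega)
  · exact (adjSwap_commute (by omega)).symm

theorem adjSwap_pred_braid {n a b : ℕ} (ha : 1 ≤ a) (hb : 1 ≤ b) (ha' : a < n) (hb' : b < n)
    (h : a + 1 = b ∨ b + 1 = a) :
    adjSwap n (a - 1) * adjSwap n (b - 1) * adjSwap n (a - 1) =
      adjSwap n (b - 1) * adjSwap n (a - 1) * adjSwap n (b - 1) := by
  rcases h with rfl | rfl
  · obtain ⟨k, rfl⟩ : ∃ k, a = k + 1 := ⟨a - 1, by omega⟩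
    exact adjSwap_braid (by omega)
  · obtain ⟨k, rfl⟩ : ∃ k, b = k + 1 := ⟨b - 1, by omega⟩
    exact (adjSwap_braid (by omega)).symm

end AdjacentTranspositions

section HeckeAction

variable {P : Type*} [PartialOrder P] [BoundedOrder P] {n : ℕ}
  {U : ℕ → MaxChain n P → MaxChain n P} {i j : ℕ}

namespace IsLocalHeckeAction

theorem apply_of_ne (hU : IsLocalHeckeAction n U) (hi1 : 1 ≤ i) (hi2 : i < n)
    (c : MaxChain n P) (hj : j ≠ i) : (U i c).1 j = c.1 j :=
  hU.1 i hi1 hi2 c j hj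

theorem apply_eq_self_iff (hU : IsLocalHeckeAction n U) (hi1 : 1 ≤ i) (hi2 : i < n)
    (c : MaxChain n P) : U i c = c ↔ (U i c).1 i = c.1 i := by
  refine ⟨fun h => by rw [h], fun h => Subtype.ext (funext fun k => ?_)⟩
  by_cases hk : k = i
  · rw [hk, h]
  · exact hU.apply_of_ne hi1 hi2 c hk

theorem comm_of_far (hU : IsLocalHeckeAction n U) (hi1 : 1 ≤ i) (hi2 : i < n) (hj1 : 1 ≤ j)
    (hj2 : j < n) (h : i + 2 ≤ j ∨ j + 2 ≤ i) (c : MaxChain n P) :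
    U i (U j c) = U j (U i c) := by
  rcases h with h | h
  · exact hU.2.2.1 i j hi1 hi2 hj1 hj2 h c
  · exact (hU.2.2.1 j i hj1 hj2 hi1 hi2 h c).symm

theorem braid_of_adjacent (hU : IsLocalHeckeAction n U) (hi1 : 1 ≤ i) (hi2 : i < n)
    (hj1 : 1 ≤ j) (hj2 : j < n) (h : i + 1 = j ∨ j + 1 = i) (c : MaxChain n P) :
    U i (U j (U i c)) = U j (U i (U j c)) := by
  rcases h with rfl | rfl
  · exact hU.2.2.2 i hi1 hj2 c
  · exact (hU.2.2.2 j hj1 hi2 c).symm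

theorem moves_of_far (hU : IsLocalHeckeAction n U) (hi1 : 1 ≤ i) (hi2 : i < n) (hj1 : 1 ≤ j)
    (hj2 : j < n) (h : i + 2 ≤ j ∨ j + 2 ≤ i) {c : MaxChain n P} (hjc : U j c ≠ c) :
    U j (U i c) ≠ U i c := by
  intro hfix
  have hij : U i (U j c) = U i c := by rw [hU.comm_of_far hi1 hi2 hj1 hj2 h, hfix]
  refine hjc ((hU.apply_eq_self_iff hj1 hj2 c).2 ?_)
  calc (U j c).1 j = (U i (U j c)).1 j := (hU.apply_of_ne hi1 hi2 _ (by omega)).symm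
    _ = (U i c).1 j := by rw [hij]
    _ = c.1 j := hU.apply_of_ne hi1 hi2 c (by omega)

/-- If `U_i` and `U_{i+1}` both move `c`, then `cᵢ, cᵢ₊₁, (U_i c)ᵢ, (U_{i+1} c)ᵢ₊₁` would form a
bowtie if some maximal chain passed through `(U_i c)ᵢ` and `(U_{i+1} c)ᵢ₊₁`. -/
theorem not_rank_eq_and_rank_eq (hU : IsLocalHeckeAction n U) (hb : BowtieFree P)
    (hi1 : 1 ≤ i) (hi2 : i < n) (hj1 : 1 ≤ j) (hj2 : j < n) (h : i + 1 = j ∨ j + 1 = i)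
    {c : MaxChain n P} (hic : U i c ≠ c) (hjc : U j c ≠ c) (D : MaxChain n P) :
    ¬ (D.1 i = (U i c).1 i ∧ D.1 j = (U j c).1 j) := by
  wlog hij : i + 1 = j generalizing i j
  · exact fun hD => this hj1 hj2 hi1 hi2 h.symm hjc hic (by omega) hD.symm
  subst hij
  rintro ⟨hDi, hDj⟩
  have hcov : ∀ d : MaxChain n P, d.1 i ⋖ d.1 (i + 1) := fun d => d.2.2.2 i hi2
  have hA := hcov (U i c)
  have hB := hcov (U (i + 1) c)
  have hD := hcov D
  rw [hU.apply_of_ne (j := i + 1) hi1 hi2 c (by omega)] at hA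
  rw [hU.apply_of_ne (j := i) hj1 hj2 c (by omega)] at hB
  rw [hDi, hDj] at hD
  rcases hb _ _ _ _ (hcov c) hA hB hD with h | h
  · exact hjc ((hU.apply_eq_self_iff hj1 hj2 c).2 h.symm)
  · exact hic ((hU.apply_eq_self_iff hi1 hi2 c).2 h.symm)

theorem moves_of_adjacent (hU : IsLocalHeckeAction n U) (hb : BowtieFree P)
    (hi1 : 1 ≤ i) (hi2 : i < n) (hj1 : 1 ≤ j) (hj2 : j < n) (h : i + 1 = j ∨ j + 1 = i)
    {c : MaxChain n P} (hic : U i c ≠ c) (hjc : U j c ≠ c) :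
    U j (U i c) ≠ U i c ∧ U i (U j (U i c)) ≠ U j (U i c) := by
  have hne : (U i (U j c)).1 i ≠ (U i c).1 i := fun hi =>
    hU.not_rank_eq_and_rank_eq hb hi1 hi2 hj1 hj2 h hic hjc _
      ⟨hi, hU.apply_of_ne hi1 hi2 _ (by omega)⟩
  have hbraid : (U i (U j (U i c))).1 i = (U i (U j c)).1 i := by
    rw [hU.braid_of_adjacent hi1 hi2 hj1 hj2 h]
    exact hU.apply_of_ne hj1 hj2 _ (by omega)
  constructor
  · intro hfix
    rw [hfix, hU.2.1 i hi1 hi2] at hbraid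
    exact hne hbraid.symm
  · intro hfix
    rw [hfix, hU.apply_of_ne hj1 hj2 _ (by omega)] at hbraid
    exact hne hbraid.symm

end IsLocalHeckeAction

variable {m m' m0 A : MaxChain n P} {w v : List ℕ} {a : ℕ}

theorem restless_nil_iff : Restless U [] m m' ↔ m = m' := by
  simp [Restless]

theorem restless_cons_iff :
    Restless U (a :: w) m m' ↔
      Restless U w m (w.foldr U m) ∧ U a (w.foldr U m) ≠ w.foldr U m ∧
        U a (w.foldr U m) = m' := by
  simp only [Restless, List.foldr_cons, List.suffix_cons_iff, List.cons.injEq]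
  constructor
  · rintro ⟨hm', h⟩
    exact ⟨⟨trivial, fun i t ht => h i t (Or.inr ht)⟩, h a w (Or.inl ⟨rfl, rfl⟩), hm'⟩
  · rintro ⟨⟨-, h⟩, ha, hm'⟩
    refine ⟨hm', fun i t ht => ?_⟩
    rcases ht with ⟨rfl, rfl⟩ | ht
    · exact ha
    · exact h i t ht

theorem restless_append_singleton_iff :
    Restless U (w ++ [a]) m m' ↔ U a m ≠ m ∧ Restless U w (U a m) m' := by
  induction w generalizing m' with
  | nil => simp [restless_cons_iff, restless_nil_iff]
  | cons b w ih =>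
    simp only [List.cons_append, restless_cons_iff, ih, List.foldr_append, List.foldr_cons,
      List.foldr_nil]
    tauto

theorem eq_nil_of_restless_of_fixed (hm0 : ∀ i, 1 ≤ i → i < n → U i m0 = m0)
    (hw : ∀ i ∈ w, 1 ≤ i ∧ i < n) (h : Restless U w m0 m') : w = [] := by
  rcases w.eq_nil_or_concat' with rfl | ⟨w, a, rfl⟩
  · rfl
  · obtain ⟨ha1, ha2⟩ := hw a (by simp)
    exact absurd (hm0 a ha1 ha2) (restless_append_singleton_iff.1 h).1

def IsExchangeWord (U : ℕ → MaxChain n P → MaxChain n P) (m0 : MaxChain n P) (w : List ℕ)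
    (A : MaxChain n P) (j : ℕ) (v : List ℕ) : Prop :=
  (∀ b ∈ v, 1 ≤ b ∧ b < n) ∧ v.length + 1 = w.length ∧ Restless U v (U j A) m0 ∧
    swapWord n v * adjSwap n (j - 1) = swapWord n w

namespace IsExchangeWord

theorem append_far (hU : IsLocalHeckeAction n U) (hv : IsExchangeWord U m0 w (U a A) j v)
    (ha1 : 1 ≤ a) (ha2 : a < n) (hj1 : 1 ≤ j) (hj2 : j < n) (h : a + 2 ≤ j ∨ j + 2 ≤ a)
    (ha : U a (U j A) ≠ U j A) : IsExchangeWord U m0 (w ++ [a]) A j (v ++ [a]) := by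
  obtain ⟨hv, hlen, hr, hprod⟩ := hv
  refine ⟨?_, by simp [hlen], restless_append_singleton_iff.2 ⟨ha, ?_⟩, ?_⟩
  · exact List.forall_mem_append.2 ⟨hv, List.forall_mem_singleton.2 ⟨ha1, ha2⟩⟩
  · rwa [hU.comm_of_far ha1 ha2 hj1 hj2 h]
  · rw [swapWord_append_singleton, swapWord_append_singleton, mul_assoc,
      (adjSwap_pred_commute ha1 hj1 h).eq, ← mul_assoc, hprod]

theorem append_adjacent (hU : IsLocalHeckeAction n U) {v₁ : List ℕ}
    (hv₁ : IsExchangeWord U m0 w (U a A) j v₁) (hv : IsExchangeWord U m0 v₁ (U j (U a A)) a v)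
    (ha1 : 1 ≤ a) (ha2 : a < n) (hj1 : 1 ≤ j) (hj2 : j < n) (h : a + 1 = j ∨ j + 1 = a)
    (ha : U a (U j A) ≠ U j A) (hj : U j (U a (U j A)) ≠ U a (U j A)) :
    IsExchangeWord U m0 (w ++ [a]) A j (v ++ [j] ++ [a]) := by
  obtain ⟨-, hlen₁, -, hprod₁⟩ := hv₁
  obtain ⟨hv, hlen, hr, hprod⟩ := hv
  refine ⟨?_, by simp; omega, ?_, ?_⟩
  · exact List.forall_mem_append.2 ⟨List.forall_mem_append.2
      ⟨hv, List.forall_mem_singleton.2 ⟨hj1, hj2⟩⟩, List.forall_mem_singleton.2 ⟨ha1, ha2⟩⟩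
  · rw [hU.braid_of_adjacent ha1 ha2 hj1 hj2 h] at hr
    exact restless_append_singleton_iff.2 ⟨ha, restless_append_singleton_iff.2 ⟨hj, hr⟩⟩
  · calc swapWord n (v ++ [j] ++ [a]) * adjSwap n (j - 1)
        = swapWord n v * (adjSwap n (j - 1) * adjSwap n (a - 1) * adjSwap n (j - 1)) := by
          simp only [swapWord_append_singleton, mul_assoc]
      _ = swapWord n v * (adjSwap n (a - 1) * adjSwap n (j - 1) * adjSwap n (a - 1)) := by
          rw [adjSwap_pred_braid hj1 ha1 hj2 ha2 h.symm]
      _ = swapWord n (w ++ [a]) := by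
          rw [swapWord_append_singleton, ← hprod₁, ← hprod]
          simp only [mul_assoc]

end IsExchangeWord

theorem Restless.exists_isExchangeWord (hU : IsLocalHeckeAction n U) (hb : BowtieFree P)
    (hm0 : ∀ i, 1 ≤ i → i < n → U i m0 = m0) (hw : ∀ i ∈ w, 1 ≤ i ∧ i < n)
    (hj1 : 1 ≤ j) (hj2 : j < n) (hr : Restless U w A m0) (hj : U j A ≠ A) :
    ∃ v, IsExchangeWord U m0 w A j v := by
  induction hk : w.length using Nat.strong_induction_on generalizing w A j with
  | _ k ih =>
  subst hk
  rcases w.eq_nil_or_concat' with rfl | ⟨w, a, rfl⟩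
  · exact absurd (restless_nil_iff.1 hr ▸ hm0 j hj1 hj2) hj
  obtain ⟨ha, hr⟩ := restless_append_singleton_iff.1 hr
  obtain ⟨ha1, ha2⟩ := hw a (by simp)
  have hw : ∀ i ∈ w, 1 ≤ i ∧ i < n := fun i hi => hw i (by simp [hi])
  have ih : ∀ {v : List ℕ} {A : MaxChain n P} {j : ℕ}, v.length ≤ w.length →
      (∀ i ∈ v, 1 ≤ i ∧ i < n) → 1 ≤ j → j < n → Restless U v A m0 → U j A ≠ A →
      ∃ v', IsExchangeWord U m0 v A j v' :=
    fun hlen hv hj1 hj2 hr hj => ih _ (by simp; omega) hv hj1 hj2 hr hj rfl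
  rcases (by omega : a = j ∨ (a + 1 = j ∨ j + 1 = a) ∨ (a + 2 ≤ j ∨ j + 2 ≤ a)) with
    rfl | hadj | hfar
  · exact ⟨w, hw, by simp, hr, (swapWord_append_singleton n w a).symm⟩
  · obtain ⟨hja, haja⟩ := hU.moves_of_adjacent hb ha1 ha2 hj1 hj2 hadj ha hj
    obtain ⟨v₁, hv₁⟩ := ih le_rfl hw hj1 hj2 hr hja
    obtain ⟨v, hv⟩ := ih (by have := hv₁.2.1; omega) hv₁.1 ha1 ha2 hv₁.2.2.1 haja
    obtain ⟨haj, hjaj⟩ := hU.moves_of_adjacent hb hj1 hj2 ha1 ha2 hadj.symm hj ha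
    exact ⟨_, hv₁.append_adjacent hU hv ha1 ha2 hj1 hj2 hadj haj hjaj⟩
  · obtain ⟨v, hv⟩ := ih le_rfl hw hj1 hj2 hr (hU.moves_of_far ha1 ha2 hj1 hj2 hfar hj)
    exact ⟨_, hv.append_far hU ha1 ha2 hj1 hj2 hfar
      (hU.moves_of_far hj1 hj2 ha1 ha2 hfar.symm ha)⟩

end HeckeAction

theorem restless_words_give_same_permutation_general {P : Type*} [PartialOrder P]
    [BoundedOrder P] {n : ℕ} (rk : P → ℕ)
    (hb : BowtieFree P) (U : ℕ → MaxChain n P → MaxChain n P)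
    (hU : IsGoodHeckeAction n rk U)
    (m0 : MaxChain n P) (hm0 : ∀ i, 1 ≤ i → i < n → U i m0 = m0)
    (m : MaxChain n P) (l1 l2 : List ℕ)
    (hl1 : ∀ i ∈ l1, 1 ≤ i ∧ i < n) (hl2 : ∀ i ∈ l2, 1 ≤ i ∧ i < n)
    (hr1 : Restless U l1 m m0) (hr2 : Restless U l2 m m0) :
    (l1.map fun i => adjSwap n (i - 1)).prod = (l2.map fun i => adjSwap n (i - 1)).prod := by
  change swapWord n l1 = swapWord n l2
  induction l1 using List.reverseRecOn generalizing m l2 with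
  | nil =>
    obtain rfl : m = m0 := restless_nil_iff.1 hr1
    rw [eq_nil_of_restless_of_fixed hm0 hl2 hr2]
  | append_singleton w i ih =>
    obtain ⟨hi, hw⟩ := restless_append_singleton_iff.1 hr1
    obtain ⟨hi1, hi2⟩ := hl1 i (by simp)
    obtain ⟨v, hv, -, hrv, hprod⟩ := hr2.exists_isExchangeWord hU.1 hb hm0 hl2 hi1 hi2 hi
    rw [swapWord_append_singleton, ih (U i m) v (fun b hb => hl1 b (by simp [hb])) hv hw hrv,
      hprod]

/-- For a good `H_n(0)` action on a finite graded bowtie-free poset,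
any two restless expressions taking a maximal chain `m` to the unique descent-free
maximal chain `m₀` have equal products of adjacent transpositions in `S_n`. -/
theorem restless_words_give_same_permutation {P : Type*} [PartialOrder P]
    [BoundedOrder P] [Fintype P] {n : ℕ} (rk : P → ℕ) (hg : IsGraded n rk)
    (hb : BowtieFree P) (U : ℕ → MaxChain n P → MaxChain n P)
    (hU : IsGoodHeckeAction n rk U)
    (m0 : MaxChain n P) (hm0 : ∀ i, 1 ≤ i → i < n → U i m0 = m0)
    (hm0uniq : ∀ m : MaxChain n P, (∀ i, 1 ≤ i → i < n → U i m = m) → m = m0)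
    (m : MaxChain n P) (l1 l2 : List ℕ)
    (hl1 : ∀ i ∈ l1, 1 ≤ i ∧ i < n) (hl2 : ∀ i ∈ l2, 1 ≤ i ∧ i < n)
    (hr1 : Restless U l1 m m0) (hr2 : Restless U l2 m m0) :
    (l1.map fun i => adjSwap n (i - 1)).prod = (l2.map fun i => adjSwap n (i - 1)).prod :=
  restless_words_give_same_permutation_general rk hb U hU m0 hm0 m l1 l2 hl1 hl2 hr1 hr2
end
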